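/- arXiv:2601.20170 — 11 statements merged into one kernel-verified Lean document; each statement's English description precedes it below -/
import Mathlib

section
/- Fix λ > 0 and a point z* = (w*, b*) ∈ ℝ^n × ℝ, and let I₀* := {i ∈ {1,…,m} : u_i(z*) ≤ 0}. Then z* is a local minimizer of (P_{0/1}) if and only if z* is a global minimizer of the hard-margin problem (P_{I₀*}). -/
open scoped RealInnerProductSpace BigOperators

noncomputable section

/-- The 0/1 loss: `1` if `t > 0`, `0` otherwise. -/
def l01 (t : ℝ) : ℝ := if 0 < t then 1 else 0

/-- The ramp loss with parameter `γ`. -/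
def ramp (γ t : ℝ) : ℝ := if γ < t then 1 else if 0 ≤ t then t else 0

variable {n m : ℕ}

/-- The margin residual `u_i(z) = 1 - y_i (⟨w, x_i⟩ + b)` for `z = (w, b)`. -/
def uu (x : Fin m → EuclideanSpace ℝ (Fin n)) (y : Fin m → ℝ)
    (z : EuclideanSpace ℝ (Fin n) × ℝ) (i : Fin m) : ℝ :=
  1 - y i * (⟪z.1, x i⟫ + z.2)

/-- The 0/1-loss SVM objective `F_{0/1}`. -/
def F01 (x : Fin m → EuclideanSpace ℝ (Fin n)) (y : Fin m → ℝ) (lam : ℝ)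
    (z : EuclideanSpace ℝ (Fin n) × ℝ) : ℝ :=
  (1 / 2) * ‖z.1‖ ^ 2 + lam * ∑ i, l01 (uu x y z i)

/-- The hinge-loss SVM objective `F₁(z, c)`. -/
def F1 (x : Fin m → EuclideanSpace ℝ (Fin n)) (y : Fin m → ℝ)
    (c : EuclideanSpace ℝ (Fin m)) (z : EuclideanSpace ℝ (Fin n) × ℝ) : ℝ :=
  (1 / 2) * ‖z.1‖ ^ 2 + ∑ i, c i * max (uu x y z i) 0

/-- The dual quadratic objective `G(α) = (1/2)⟨α, Qα⟩ - Σ αᵢ`,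
where `Q_{ij} = y_i y_j ⟨x_i, x_j⟩`. -/
def Gfun (x : Fin m → EuclideanSpace ℝ (Fin n)) (y : Fin m → ℝ)
    (α : EuclideanSpace ℝ (Fin m)) : ℝ :=
  (1 / 2) * ∑ i, ∑ j, α i * (y i * y j * ⟪x i, x j⟫) * α j - ∑ i, α i

/-- The ℓ₀ "norm": the number of nonzero entries. -/
def norm0 (α : EuclideanSpace ℝ (Fin m)) : ℝ := (({i | α i ≠ 0} : Set (Fin m)).ncard : ℝ)

/-- Feasibility for the dual problem `(D_{0/1})`. -/
def DFeas (y : Fin m → ℝ) (α : EuclideanSpace ℝ (Fin m)) : Prop :=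
  (∀ i, 0 ≤ α i) ∧ ∑ i, y i * α i = 0

/-- `α*` is a local minimizer of the dual problem `(D_{0/1})` with parameter `μ`. -/
def DLocalMin (x : Fin m → EuclideanSpace ℝ (Fin n)) (y : Fin m → ℝ) (μ : ℝ)
    (αs : EuclideanSpace ℝ (Fin m)) : Prop :=
  DFeas y αs ∧ ∃ ε > 0, ∀ α : EuclideanSpace ℝ (Fin m), DFeas y α → dist α αs ≤ ε →
    Gfun x y αs + μ * norm0 αs ≤ Gfun x y α + μ * norm0 α

/-- The KKT system (KKT-T*) for `(D_I)` with `I = T* = {i : α*_i ≠ 0}`: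
`Qα* - 1 + u* + b* y = 0`; `α*_i ≥ 0`, `u*_i ≤ 0`, `α*_i u*_i = 0` on `T*`;
(`α*_i = 0` off `T*` holds by definition of `T*`); and `⟨y, α*⟩ = 0`. -/
def KKTT (x : Fin m → EuclideanSpace ℝ (Fin n)) (y : Fin m → ℝ)
    (αs us : EuclideanSpace ℝ (Fin m)) (bs : ℝ) : Prop :=
  (∀ i, (∑ j, (y i * y j * ⟪x i, x j⟫) * αs j) - 1 + us i + bs * y i = 0) ∧
  (∀ i, αs i ≠ 0 → 0 ≤ αs i ∧ us i ≤ 0 ∧ αs i * us i = 0) ∧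
  ∑ i, y i * αs i = 0

/-- The ramp-loss SVM objective of `(P_r)`. -/
def PrObj (x : Fin m → EuclideanSpace ℝ (Fin n)) (y : Fin m → ℝ) (ρ γ : ℝ)
    (z : EuclideanSpace ℝ (Fin n) × ℝ) : ℝ :=
  (1 / 2) * ‖z.1‖ ^ 2 + ρ * ∑ i, ramp γ (uu x y z i)

/-- The penalty objective of problem (pen). -/
def Pen (x : Fin m → EuclideanSpace ℝ (Fin n)) (y : Fin m → ℝ) (ρ γ : ℝ)
    (p : (EuclideanSpace ℝ (Fin n) × ℝ) × EuclideanSpace ℝ (Fin m)) : ℝ :=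
  (1 / 2) * ‖p.1.1‖ ^ 2 + ρ * ∑ i, |uu x y p.1 i - p.2 i| + ρ * γ * ∑ i, l01 (p.2 i)

/-- The smooth part `Φ(z, v)` of the penalty objective. -/
def Phi (x : Fin m → EuclideanSpace ℝ (Fin n)) (y : Fin m → ℝ) (ρ : ℝ)
    (p : (EuclideanSpace ℝ (Fin n) × ℝ) × EuclideanSpace ℝ (Fin m)) : ℝ :=
  (1 / 2) * ‖p.1.1‖ ^ 2 + ρ * ∑ i, |uu x y p.1 i - p.2 i|

/-- The KKT system (KKT-PI) for `(P_{0/1})` at `z*`. -/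
def KKTPI (x : Fin m → EuclideanSpace ℝ (Fin n)) (y : Fin m → ℝ)
    (zs : EuclideanSpace ℝ (Fin n) × ℝ) (αs : EuclideanSpace ℝ (Fin m)) : Prop :=
  zs.1 = ∑ i, (αs i * y i) • x i ∧
  (∀ i, uu x y zs i ≤ 0 → 0 ≤ αs i ∧ αs i * uu x y zs i = 0) ∧
  (∀ i, ¬ uu x y zs i ≤ 0 → αs i = 0) ∧
  ∑ i, y i * αs i = 0


lemma l01_nonneg (t : ℝ) : 0 ≤ l01 t := by unfold l01; split <;> norm_num

lemma l01_le_one (t : ℝ) : l01 t ≤ 1 := by unfold l01; split <;> norm_num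

lemma l01_of_nonpos {t : ℝ} (h : t ≤ 0) : l01 t = 0 := by
  unfold l01; rw [if_neg]; linarith

lemma l01_of_pos {t : ℝ} (h : 0 < t) : l01 t = 1 := if_pos h

lemma uu_affine {n m : ℕ} (x : Fin m → EuclideanSpace ℝ (Fin n)) (y : Fin m → ℝ)
    (zs z : EuclideanSpace ℝ (Fin n) × ℝ) (t : ℝ) (i : Fin m) :
    uu x y ((1 - t) • zs.1 + t • z.1, (1 - t) * zs.2 + t * z.2) i
      = (1 - t) * uu x y zs i + t * uu x y z i := by
  unfold uu
  simp only [inner_add_left, real_inner_smul_left]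
  ring

lemma uu_diff_le {n m : ℕ} (x : Fin m → EuclideanSpace ℝ (Fin n)) (y : Fin m → ℝ)
    (hy : ∀ i, y i = 1 ∨ y i = -1)
    (zs z : EuclideanSpace ℝ (Fin n) × ℝ) (i : Fin m) :
    |uu x y z i - uu x y zs i| ≤ ‖z.1 - zs.1‖ * ‖x i‖ + |z.2 - zs.2| := by
  have hyi : |y i| = 1 := by rcases hy i with h | h <;> simp [h]
  have heq : uu x y z i - uu x y zs i
      = -(y i * (⟪z.1 - zs.1, x i⟫ + (z.2 - zs.2))) := by
    unfold uu; rw [inner_sub_left]; ring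
  rw [heq, abs_neg, abs_mul, hyi, one_mul]
  calc |⟪z.1 - zs.1, x i⟫ + (z.2 - zs.2)|
      ≤ |⟪z.1 - zs.1, x i⟫| + |z.2 - zs.2| := abs_add_le _ _
    _ ≤ ‖z.1 - zs.1‖ * ‖x i‖ + |z.2 - zs.2| := by
        gcongr; exact abs_real_inner_le_norm _ _


/-- `z*` is a local minimizer of `(P_{0/1})` iff it is a global minimizer
of the hard-margin problem `(P_{I₀*})` with `I₀* = {i : u_i(z*) ≤ 0}`. -/
theorem stmt0 {n m : ℕ} (hn : 0 < n) (hm : 0 < m)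
    (x : Fin m → EuclideanSpace ℝ (Fin n)) (y : Fin m → ℝ)
    (hy : ∀ i, y i = 1 ∨ y i = -1)
    (lam : ℝ) (hlam : 0 < lam)
    (zs : EuclideanSpace ℝ (Fin n) × ℝ) :
    (∃ ε > 0, ∀ z : EuclideanSpace ℝ (Fin n) × ℝ,
        dist z zs ≤ ε → F01 x y lam zs ≤ F01 x y lam z)
    ↔ ((∀ i, uu x y zs i ≤ 0 → 1 ≤ y i * (⟪zs.1, x i⟫ + zs.2)) ∧
       ∀ z : EuclideanSpace ℝ (Fin n) × ℝ,
         (∀ i, uu x y zs i ≤ 0 → 1 ≤ y i * (⟪z.1, x i⟫ + z.2)) →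
         (1 / 2) * ‖zs.1‖ ^ 2 ≤ (1 / 2) * ‖z.1‖ ^ 2) := by
  constructor
  · rintro ⟨ε, hε, hloc⟩
    have feas : ∀ i, uu x y zs i ≤ 0 → 1 ≤ y i * (⟪zs.1, x i⟫ + zs.2) := by
      intro i hi; unfold uu at hi; linarith
    refine ⟨feas, ?_⟩
    intro z hz
    have key : ‖zs.1‖ ≤ ‖z.1‖ := by
      by_cases hzz : z = zs
      · rw [hzz]
      have hd : 0 < dist z zs := dist_pos.mpr hzz
      set t : ℝ := min 1 (ε / dist z zs) with ht
      have ht0 : 0 < t := lt_min one_pos (div_pos hε hd)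
      have ht1 : t ≤ 1 := min_le_left _ _
      set zt : EuclideanSpace ℝ (Fin n) × ℝ :=
        ((1 - t) • zs.1 + t • z.1, (1 - t) * zs.2 + t * z.2) with hzt
      have htd : t * dist z zs ≤ ε := by
        rw [← le_div_iff₀ hd]; exact min_le_right _ _
      have hdist : dist zt zs ≤ ε := by
        rw [Prod.dist_eq]
        apply max_le
        · have h1 : zt.1 - zs.1 = t • (z.1 - zs.1) := by
            simp only [hzt]; module
          rw [dist_eq_norm, h1, norm_smul, Real.norm_eq_abs, abs_of_pos ht0]
          calc t * ‖z.1 - zs.1‖ = t * dist z.1 zs.1 := by rw [dist_eq_norm]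
            _ ≤ t * dist z zs := by
                apply mul_le_mul_of_nonneg_left _ ht0.le
                rw [Prod.dist_eq]; exact le_max_left _ _
            _ ≤ ε := htd
        · have h2 : zt.2 - zs.2 = t * (z.2 - zs.2) := by simp only [hzt]; ring
          rw [Real.dist_eq, h2, abs_mul, abs_of_pos ht0]
          calc t * |z.2 - zs.2| = t * dist z.2 zs.2 := by rw [Real.dist_eq]
            _ ≤ t * dist z zs := by
                apply mul_le_mul_of_nonneg_left _ ht0.le
                rw [Prod.dist_eq]; exact le_max_right _ _
            _ ≤ ε := htd
      have hF := hloc zt hdist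
      have hsum : ∑ i, l01 (uu x y zt i) ≤ ∑ i, l01 (uu x y zs i) := by
        apply Finset.sum_le_sum
        intro i _
        by_cases hi : uu x y zs i ≤ 0
        · have hzi : uu x y z i ≤ 0 := by
            have := hz i hi; unfold uu; linarith
          have hti : uu x y zt i ≤ 0 := by
            rw [hzt, uu_affine]
            nlinarith
          rw [l01_of_nonpos hti, l01_of_nonpos hi]
        · push_neg at hi
          rw [l01_of_pos hi]; exact l01_le_one _
      have hsq : ‖zs.1‖ ^ 2 ≤ ‖zt.1‖ ^ 2 := by
        unfold F01 at hF
        nlinarith [mul_le_mul_of_nonneg_left hsum hlam.le]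
      have hle : ‖zs.1‖ ≤ ‖zt.1‖ := by
        nlinarith [norm_nonneg zs.1, norm_nonneg zt.1]
      have hconv : ‖zt.1‖ ≤ (1 - t) * ‖zs.1‖ + t * ‖z.1‖ := by
        calc ‖zt.1‖ ≤ ‖(1 - t) • zs.1‖ + ‖t • z.1‖ := norm_add_le _ _
          _ = (1 - t) * ‖zs.1‖ + t * ‖z.1‖ := by
              rw [norm_smul, norm_smul, Real.norm_eq_abs, Real.norm_eq_abs,
                abs_of_nonneg (by linarith : (0:ℝ) ≤ 1 - t), abs_of_pos ht0]
      have : t * ‖zs.1‖ ≤ t * ‖z.1‖ := by linarith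
      exact le_of_mul_le_mul_left this ht0
    gcongr
  · rintro ⟨-, hglob⟩
    classical
    haveI : Nonempty (Fin m) := ⟨⟨0, hm⟩⟩
    set δ : Fin m → ℝ :=
      fun i => if 0 < uu x y zs i then uu x y zs i / (2 * (‖x i‖ + 1)) else 1 with hδ
    have hδpos : ∀ i, 0 < δ i := by
      intro i; rw [hδ]; dsimp only
      split
      · rename_i h; positivity
      · norm_num
    have hne : (Finset.univ : Finset (Fin m)).Nonempty := Finset.univ_nonempty
    set ε : ℝ := min (Finset.univ.inf' hne δ) (min 1 (lam / (‖zs.1‖ + 2))) with hε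
    have hεpos : 0 < ε := by
      apply lt_min
      · exact (Finset.lt_inf'_iff hne).mpr (fun i _ => hδpos i)
      · exact lt_min one_pos (by positivity)
    refine ⟨ε, hεpos, ?_⟩
    intro z hdz
    have hd1 : ‖z.1 - zs.1‖ ≤ ε := by
      rw [← dist_eq_norm]
      calc dist z.1 zs.1 ≤ dist z zs := by rw [Prod.dist_eq]; exact le_max_left _ _
        _ ≤ ε := hdz
    have hd2 : |z.2 - zs.2| ≤ ε := by
      rw [← Real.dist_eq]
      calc dist z.2 zs.2 ≤ dist z zs := by rw [Prod.dist_eq]; exact le_max_right _ _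
        _ ≤ ε := hdz
    have hpos : ∀ i, ¬ uu x y zs i ≤ 0 → 0 < uu x y z i := by
      intro i hi
      push_neg at hi
      have hεδ : ε ≤ δ i :=
        le_trans (min_le_left _ _) (Finset.inf'_le _ (Finset.mem_univ i))
      have hδi : δ i = uu x y zs i / (2 * (‖x i‖ + 1)) := if_pos hi
      have hdiff := uu_diff_le x y hy zs z i
      have hx1 : (0:ℝ) < ‖x i‖ + 1 := by positivity
      have h2 : δ i * (‖x i‖ + 1) = uu x y zs i / 2 := by
        rw [hδi]; field_simp
      have h3 : ‖z.1 - zs.1‖ * ‖x i‖ + |z.2 - zs.2| ≤ ε * (‖x i‖ + 1) := by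
        nlinarith [norm_nonneg (z.1 - zs.1), norm_nonneg (x i)]
      have h4 : ε * (‖x i‖ + 1) ≤ δ i * (‖x i‖ + 1) := by nlinarith
      have h5 := (abs_le.mp hdiff).1
      linarith [h2 ▸ h4, h3, hi]
    have helam : ε * (‖zs.1‖ + 2) ≤ lam := by
      have : ε ≤ lam / (‖zs.1‖ + 2) := le_trans (min_le_right _ _) (min_le_right _ _)
      rwa [le_div_iff₀ (by positivity)] at this
    have hε1 : ε ≤ 1 := le_trans (min_le_right _ _) (min_le_left _ _)
    have hw : (1 / 2) * ‖zs.1‖ ^ 2 ≤ (1 / 2) * ‖z.1‖ ^ 2 + lam := by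
      have hn1 : ‖zs.1‖ ≤ ‖z.1‖ + ε := by
        have := norm_sub_norm_le zs.1 z.1
        rw [norm_sub_rev] at this
        linarith
      have hn2 : ‖z.1‖ ≤ ‖zs.1‖ + ε := by
        have := norm_sub_norm_le z.1 zs.1
        linarith
      nlinarith [norm_nonneg zs.1, norm_nonneg z.1, hεpos.le]
    by_cases hfeas : ∀ i, uu x y zs i ≤ 0 → uu x y z i ≤ 0
    · have h1 := hglob z (fun i hi => by
        have := hfeas i hi; unfold uu at this; linarith)
      have hsum : ∑ i, l01 (uu x y zs i) ≤ ∑ i, l01 (uu x y z i) := by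
        apply Finset.sum_le_sum
        intro i _
        by_cases hi : uu x y zs i ≤ 0
        · rw [l01_of_nonpos hi]; exact l01_nonneg _
        · rw [l01_of_pos (hpos i hi)]; exact l01_le_one _
      unfold F01
      nlinarith [mul_le_mul_of_nonneg_left hsum hlam.le]
    · push_neg at hfeas
      obtain ⟨j, hj1, hj2⟩ := hfeas
      have hfg : ∀ i, l01 (uu x y zs i) ≤ l01 (uu x y z i) := by
        intro i
        by_cases hi : uu x y zs i ≤ 0
        · rw [l01_of_nonpos hi]; exact l01_nonneg _
        · rw [l01_of_pos (hpos i hi)]; exact l01_le_one _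
      have hsum : ∑ i, l01 (uu x y zs i) + 1 ≤ ∑ i, l01 (uu x y z i) := by
        have hjj : l01 (uu x y z j) - l01 (uu x y zs j) = 1 := by
          rw [l01_of_pos hj2, l01_of_nonpos hj1]; ring
        have h1 : (1:ℝ) ≤ ∑ i, (l01 (uu x y z i) - l01 (uu x y zs i)) := by
          rw [← hjj]
          exact Finset.single_le_sum
            (f := fun i => l01 (uu x y z i) - l01 (uu x y zs i))
            (fun i _ => by have := hfg i; linarith) (Finset.mem_univ j)
        rw [Finset.sum_sub_distrib] at h1
        linarith
      unfold F01
      nlinarith [mul_le_mul_of_nonneg_left hsum hlam.le]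

end
end

section
/- Fix μ > 0 and let α* ∈ ℝ^m be feasible for (D_{0/1}), i.e., α* ≥ 0 componentwise and Σ_i y_i α*_i = 0. Let T* := {i : α*_i ≠ 0} and F*_D := {α ∈ ℝ^m : α_i ≥ 0 for all i ∈ T*, α_i = 0 for all i ∉ T*, Σ_i y_i α_i = 0}. Then α* is a local minimizer of (D_{0/1}) if and only if α* is a global minimizer of G over F*_D. -/
open scoped RealInnerProductSpace BigOperators

noncomputable section

variable {n m : ℕ}

lemma Gfun_eq (x : Fin m → EuclideanSpace ℝ (Fin n)) (y : Fin m → ℝ)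
    (α : EuclideanSpace ℝ (Fin m)) :
    Gfun x y α = (1 / 2) * ‖∑ i, (α i * y i) • x i‖ ^ 2 - ∑ i, α i := by
  unfold Gfun
  congr 2
  rw [← real_inner_self_eq_norm_sq, sum_inner]
  refine Finset.sum_congr rfl fun i _ => ?_
  rw [inner_sum]
  refine Finset.sum_congr rfl fun j _ => ?_
  rw [real_inner_smul_left, real_inner_smul_right]
  ring

lemma Gfun_convex (x : Fin m → EuclideanSpace ℝ (Fin n)) (y : Fin m → ℝ)
    {a b : ℝ} (ha : 0 ≤ a) (hb : 0 ≤ b) (hab : a + b = 1)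
    (β α : EuclideanSpace ℝ (Fin m)) :
    Gfun x y (a • β + b • α) ≤ a * Gfun x y β + b * Gfun x y α := by
  rw [Gfun_eq, Gfun_eq, Gfun_eq]
  set u := ∑ i, (β i * y i) • x i with hu
  set v := ∑ i, (α i * y i) • x i with hv
  have hw : (∑ i, ((a • β + b • α) i * y i) • x i) = a • u + b • v := by
    rw [hu, hv, Finset.smul_sum, Finset.smul_sum, ← Finset.sum_add_distrib]
    refine Finset.sum_congr rfl fun i _ => ?_
    simp only [PiLp.add_apply, PiLp.smul_apply, smul_eq_mul, smul_smul]
    rw [← add_smul]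
    ring_nf
  have hs : (∑ i, (a • β + b • α) i) = a * (∑ i, β i) + b * (∑ i, α i) := by
    rw [Finset.mul_sum, Finset.mul_sum, ← Finset.sum_add_distrib]
    refine Finset.sum_congr rfl fun i _ => ?_
    simp only [PiLp.add_apply, PiLp.smul_apply, smul_eq_mul]
  rw [hw, hs]
  have h2 : 2 * ⟪u, v⟫ ≤ ‖u‖ ^ 2 + ‖v‖ ^ 2 := by
    have h := norm_sub_sq_real u v
    nlinarith [sq_nonneg ‖u - v‖]
  have hex : ‖a • u + b • v‖ ^ 2
      = a ^ 2 * ‖u‖ ^ 2 + 2 * (a * b) * ⟪u, v⟫ + b ^ 2 * ‖v‖ ^ 2 := by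
    rw [norm_add_sq_real, real_inner_smul_left, real_inner_smul_right, norm_smul, norm_smul,
      Real.norm_eq_abs, Real.norm_eq_abs, abs_of_nonneg ha, abs_of_nonneg hb]
    ring
  have key : 0 ≤ a * b * (‖u‖ ^ 2 + ‖v‖ ^ 2 - 2 * ⟪u, v⟫) :=
    mul_nonneg (mul_nonneg ha hb) (by linarith)
  have hb' : b = 1 - a := by linarith
  subst hb'
  nlinarith [key, hex]

lemma coord_le_norm (v : EuclideanSpace ℝ (Fin m)) (i : Fin m) : |v i| ≤ ‖v‖ := by
  rw [EuclideanSpace.norm_eq, ← Real.sqrt_sq_eq_abs]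
  apply Real.sqrt_le_sqrt
  have : (v i) ^ 2 = ‖v i‖ ^ 2 := by rw [Real.norm_eq_abs, sq_abs]
  rw [this]
  exact Finset.single_le_sum (fun j _ => sq_nonneg ‖v j‖) (Finset.mem_univ i)

/-- a feasible `α*` is a local minimizer of `(D_{0/1})` iff it is a global
minimizer of `G` over `F*_D = {α : α_i ≥ 0 on T*, α_i = 0 off T*, ⟨y, α⟩ = 0}`. -/
theorem stmt1 {n m : ℕ} (hn : 0 < n) (hm : 0 < m)
    (x : Fin m → EuclideanSpace ℝ (Fin n)) (y : Fin m → ℝ)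
    (hy : ∀ i, y i = 1 ∨ y i = -1)
    (μ : ℝ) (hμ : 0 < μ)
    (αs : EuclideanSpace ℝ (Fin m)) (hfeas : DFeas y αs) :
    DLocalMin x y μ αs
    ↔ (((∀ i, αs i ≠ 0 → 0 ≤ αs i) ∧ (∀ i, αs i = 0 → αs i = 0) ∧
          ∑ i, y i * αs i = 0) ∧
       ∀ α : EuclideanSpace ℝ (Fin m),
         (∀ i, αs i ≠ 0 → 0 ≤ α i) → (∀ i, αs i = 0 → α i = 0) →
         ∑ i, y i * α i = 0 → Gfun x y αs ≤ Gfun x y α) := by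
  constructor
  · rintro ⟨-, ε, hε, hball⟩
    refine ⟨⟨fun i _ => hfeas.1 i, fun i h => h, hfeas.2⟩, ?_⟩
    intro α hpos hzero hsum
    have hαpos : ∀ i, 0 ≤ α i := by
      intro i
      by_cases h : αs i = 0
      · exact le_of_eq (hzero i h).symm
      · exact hpos i h
    set d := dist α αs with hd
    have hd0 : 0 ≤ d := dist_nonneg
    set t := ε / (d + ε) with ht
    have ht0 : 0 < t := div_pos hε (by linarith)
    have ht1 : t ≤ 1 := by rw [ht, div_le_one (by linarith)]; linarith
    set a := 1 - t with ha
    have ha0 : 0 ≤ a := by linarith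
    set αt : EuclideanSpace ℝ (Fin m) := a • αs + t • α with hαt
    have happ : ∀ i, αt i = a * αs i + t * α i := by
      intro i
      simp [hαt, PiLp.add_apply, PiLp.smul_apply]
    have hfeast : DFeas y αt := by
      constructor
      · intro i
        rw [happ]
        exact add_nonneg (mul_nonneg ha0 (hfeas.1 i)) (mul_nonneg ht0.le (hαpos i))
      · have h1 : ∑ i, y i * αt i = a * ∑ i, y i * αs i + t * ∑ i, y i * α i := by
          rw [Finset.mul_sum, Finset.mul_sum, ← Finset.sum_add_distrib]
          exact Finset.sum_congr rfl fun i _ => by rw [happ]; ring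
        rw [h1, hfeas.2, hsum]; ring
    have hdist : dist αt αs ≤ ε := by
      have hsub : αt - αs = t • (α - αs) := by
        ext i
        simp only [PiLp.sub_apply, PiLp.smul_apply, smul_eq_mul, happ]
        ring
      rw [dist_eq_norm, hsub, norm_smul, Real.norm_eq_abs, abs_of_nonneg ht0.le,
        ← dist_eq_norm, ← hd, ht, div_mul_eq_mul_div, div_le_iff₀ (by linarith)]
      nlinarith
    have hsupp : {i | αt i ≠ 0} ⊆ {i | αs i ≠ 0} := by
      intro i hi
      simp only [Set.mem_setOf_eq] at hi ⊢
      intro h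
      apply hi
      rw [happ, h, hzero i h]
      ring
    have hN : norm0 αt ≤ norm0 αs := by
      unfold norm0
      exact_mod_cast Set.ncard_le_ncard hsupp (Set.toFinite _)
    have hb := hball αt hfeast hdist
    have hG1 : Gfun x y αs ≤ Gfun x y αt := by nlinarith
    have hG2 : Gfun x y αt ≤ a * Gfun x y αs + t * Gfun x y α :=
      Gfun_convex x y ha0 ht0.le (by rw [ha]; ring) αs α
    rw [ha] at hG2
    have : t * Gfun x y αs ≤ t * Gfun x y α := by nlinarith [hG1, hG2]
    exact le_of_mul_le_mul_left this ht0
  · rintro ⟨-, hglob⟩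
    refine ⟨hfeas, ?_⟩
    have hc : Continuous (Gfun x y) := by
      unfold Gfun
      have hap : ∀ i, Continuous (fun α : EuclideanSpace ℝ (Fin m) => α i) :=
        fun i => (EuclideanSpace.proj i : EuclideanSpace ℝ (Fin m) →L[ℝ] ℝ).continuous
      exact ((continuous_const.mul (continuous_finset_sum _ fun i _ =>
        continuous_finset_sum _ fun j _ =>
          (((hap i).mul continuous_const).mul (hap j)))).sub
        (continuous_finset_sum _ fun i _ => hap i))
    obtain ⟨δ, hδ, hδball⟩ := Metric.continuousAt_iff.mp hc.continuousAt μ hμ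
    have hne : (Finset.univ : Finset (Fin m)).Nonempty := ⟨⟨0, hm⟩, Finset.mem_univ _⟩
    set c := Finset.univ.inf' hne (fun i => if αs i = 0 then (1 : ℝ) else |αs i|) with hcdef
    have hc0 : 0 < c := by
      rw [hcdef, Finset.lt_inf'_iff]
      intro i _
      by_cases h : αs i = 0 <;> simp [h, abs_pos]
    have hcle : ∀ i, αs i ≠ 0 → c ≤ |αs i| := by
      intro i hi
      have := Finset.inf'_le (fun i => if αs i = 0 then (1 : ℝ) else |αs i|)
        (Finset.mem_univ i)
      rwa [if_neg hi] at this
    refine ⟨min (δ / 2) (c / 2), lt_min (by linarith) (by linarith), ?_⟩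
    intro α hαfeas hαdist
    have hclose : dist α αs < δ := (hαdist.trans (min_le_left _ _)).trans_lt (by linarith)
    have hsupp : ∀ i, αs i ≠ 0 → α i ≠ 0 := by
      intro i hi h0
      have h1 : |α i - αs i| ≤ dist α αs := by
        rw [dist_eq_norm]
        exact coord_le_norm (α - αs) i
      have h2 : |α i - αs i| ≤ c / 2 := h1.trans (hαdist.trans (min_le_right _ _))
      rw [h0] at h2
      have h3 : c ≤ |αs i| := hcle i hi
      rw [abs_sub_comm, sub_zero] at h2
      linarith
    have hGclose : |Gfun x y α - Gfun x y αs| < μ := by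
      have := hδball hclose
      rwa [Real.dist_eq] at this
    by_cases hcase : ∀ i, αs i = 0 → α i = 0
    · have hNeq : norm0 α = norm0 αs := by
        have hseteq : {i | α i ≠ 0} = {i | αs i ≠ 0} := by
          ext i
          simp only [Set.mem_setOf_eq]
          constructor
          · intro h hs; exact h (hcase i hs)
          · intro h; exact hsupp i h
        unfold norm0
        rw [hseteq]
      have hG : Gfun x y αs ≤ Gfun x y α :=
        hglob α (fun i _ => hαfeas.1 i) hcase hαfeas.2
      rw [hNeq]
      linarith
    · push_neg at hcase
      obtain ⟨j, hj0, hjne⟩ := hcase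
      have hss : {i | αs i ≠ 0} ⊂ {i | α i ≠ 0} := by
        constructor
        · intro i hi
          exact hsupp i hi
        · intro h
          exact hjne (by_contra fun hc' => (h hc') hj0)
      have hlt : ({i | αs i ≠ 0} : Set (Fin m)).ncard < ({i | α i ≠ 0} : Set (Fin m)).ncard :=
        Set.ncard_lt_ncard hss (Set.toFinite _)
      have hN : norm0 αs + 1 ≤ norm0 α := by
        unfold norm0
        exact_mod_cast hlt
      have habs := abs_lt.mp hGclose
      nlinarith

end
end

section
/- Let α* be a local minimizer of (D_{0/1}) and suppose (u*, b*) ∈ ℝ^m × ℝ satisfies (KKT-T*). Define w* := Σ_{i=1}^m α*_i y_i x_i and z* := (w*, b*). Then for every λ > 0, z* is a local minimizer of (P_{0/1}). -/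
open scoped RealInnerProductSpace BigOperators

noncomputable section

variable {n m : ℕ}

/-- if `α*` is a local minimizer of `(D_{0/1})` and `(u*, b*)` satisfies
(KKT-T*), then `z* = (w*, b*)` with `w* = Σ α*_i y_i x_i` is a local minimizer of
`(P_{0/1})` for every `λ > 0`. -/
theorem stmt2 {n m : ℕ} (hn : 0 < n) (hm : 0 < m)
    (x : Fin m → EuclideanSpace ℝ (Fin n)) (y : Fin m → ℝ)
    (hy : ∀ i, y i = 1 ∨ y i = -1)
    (μ : ℝ) (hμ : 0 < μ)
    (αs us : EuclideanSpace ℝ (Fin m)) (bs : ℝ)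
    (hloc : DLocalMin x y μ αs)
    (hkkt : KKTT x y αs us bs)
    (ws : EuclideanSpace ℝ (Fin n)) (hws : ws = ∑ i, (αs i * y i) • x i) :
    ∀ lam : ℝ, 0 < lam →
      ∃ ε > 0, ∀ z : EuclideanSpace ℝ (Fin n) × ℝ,
        dist z (ws, bs) ≤ ε → F01 x y lam (ws, bs) ≤ F01 x y lam z := by
  classical
  intro lam hlam
  obtain ⟨⟨hpos, hsumy⟩, -⟩ := hloc
  obtain ⟨heq, hcompl, -⟩ := hkkt
  have hcomp : ∀ i, αs i * us i = 0 := by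
    intro i
    by_cases h : αs i = 0
    · simp [h]
    · exact (hcompl i h).2.2
  have hinner : ∀ v : EuclideanSpace ℝ (Fin n),
      ⟪v, ws⟫ = ∑ j, (αs j * y j) * ⟪v, x j⟫ := by
    intro v
    rw [hws, inner_sum]
    exact Finset.sum_congr rfl fun j _ => real_inner_smul_right v (x j) _
  have hQrow : ∀ i, (∑ j, (y i * y j * ⟪x i, x j⟫) * αs j) = y i * ⟪x i, ws⟫ := by
    intro i
    rw [hinner (x i), Finset.mul_sum]
    exact Finset.sum_congr rfl fun j _ => by ring
  have hyw : ∀ j, y j * ⟪x j, ws⟫ = 1 - us j - bs * y j := by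
    intro j
    have h := heq j
    rw [hQrow j] at h
    linarith
  have hus : ∀ i, uu x y (ws, bs) i = us i := by
    intro i
    have h := hyw i
    have hc : ⟪(ws : EuclideanSpace ℝ (Fin n)), x i⟫ = ⟪x i, ws⟫ := real_inner_comm _ _
    unfold uu
    simp only
    rw [hc]
    linear_combination -h
  have hnorm : ‖ws‖ ^ 2 = ∑ i, αs i := by
    have h1 : (‖ws‖ : ℝ) ^ 2 = ⟪ws, ws⟫ := (real_inner_self_eq_norm_sq ws).symm
    rw [h1, hinner ws]
    have hterm : ∀ j, (αs j * y j) * ⟪(ws : EuclideanSpace ℝ (Fin n)), x j⟫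
        = αs j - (αs j * us j) - bs * (y j * αs j) := by
      intro j
      have hc : ⟪(ws : EuclideanSpace ℝ (Fin n)), x j⟫ = ⟪x j, ws⟫ := real_inner_comm _ _
      rw [hc]
      linear_combination αs j * hyw j
    rw [Finset.sum_congr rfl fun j _ => hterm j, Finset.sum_sub_distrib,
      Finset.sum_sub_distrib, ← Finset.mul_sum, hsumy]
    simp [hcomp]
  have hαu : ∀ z : EuclideanSpace ℝ (Fin n) × ℝ,
      ∑ i, αs i * uu x y z i = (∑ i, αs i) - ⟪z.1, ws⟫ := by
    intro z
    have hterm : ∀ i, αs i * uu x y z i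
        = αs i - (αs i * y i) * ⟪z.1, x i⟫ - z.2 * (y i * αs i) := by
      intro i; unfold uu; ring
    rw [Finset.sum_congr rfl fun i _ => hterm i, Finset.sum_sub_distrib,
      Finset.sum_sub_distrib, ← Finset.mul_sum, hsumy, hinner z.1]
    ring
  set A := ∑ i, αs i with hA
  have hA0 : 0 ≤ A := Finset.sum_nonneg fun i _ => hpos i
  have hαle : ∀ i, αs i ≤ A := fun i =>
    Finset.single_le_sum (fun j _ => hpos j) (Finset.mem_univ i)
  set K := ∑ i, ‖x i‖ with hK
  have hK0 : 0 ≤ K := Finset.sum_nonneg fun i _ => norm_nonneg _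
  have hxle : ∀ i, ‖x i‖ ≤ K := fun i =>
    Finset.single_le_sum (fun j _ => norm_nonneg _) (Finset.mem_univ i)
  have hne : (Finset.univ : Finset (Fin m)).Nonempty := ⟨⟨0, hm⟩, Finset.mem_univ _⟩
  set δ0 : ℝ := Finset.univ.inf' hne (fun i => if 0 < us i then us i / 2 else 1) with hδ0
  have hδ0pos : 0 < δ0 := by
    rw [hδ0, Finset.lt_inf'_iff]
    intro i _
    by_cases h : 0 < us i
    · rw [if_pos h]; linarith
    · rw [if_neg h]; norm_num
  set δ : ℝ := min δ0 (lam / (A + 1)) with hδ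
  have hδpos : 0 < δ := lt_min hδ0pos (by positivity)
  refine ⟨δ / (2 * (K + 1)), by positivity, ?_⟩
  intro z hz
  rw [Prod.dist_eq] at hz
  obtain ⟨hz1, hz2⟩ := max_le_iff.mp hz
  rw [dist_eq_norm] at hz1
  rw [Real.dist_eq] at hz2
  have hub : ∀ i, |uu x y z i - us i| ≤ δ / 2 := by
    intro i
    rw [← hus i]
    have hdiff : uu x y z i - uu x y (ws, bs) i
        = -(y i) * (⟪z.1 - ws, x i⟫ + (z.2 - bs)) := by
      unfold uu
      simp only
      rw [inner_sub_left]
      ring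
    rw [hdiff, abs_mul, abs_neg]
    have hy1 : |y i| = 1 := by rcases hy i with h | h <;> simp [h]
    rw [hy1, one_mul]
    have hK1 : (0:ℝ) < K + 1 := by linarith
    calc |⟪z.1 - ws, x i⟫ + (z.2 - bs)|
        ≤ |⟪z.1 - ws, x i⟫| + |z.2 - bs| := abs_add_le _ _
      _ ≤ ‖z.1 - ws‖ * ‖x i‖ + |z.2 - bs| := by
          have := abs_real_inner_le_norm (z.1 - ws) (x i)
          linarith
      _ ≤ (δ / (2 * (K + 1))) * K + δ / (2 * (K + 1)) := by
          have h1 : ‖z.1 - ws‖ * ‖x i‖ ≤ (δ / (2 * (K + 1))) * K := by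
            apply mul_le_mul hz1 (hxle i) (norm_nonneg _)
            positivity
          linarith
      _ ≤ δ / 2 := by
          have hne2 : (K + 1) ≠ 0 := by positivity
          have heq2 : δ / (2 * (K + 1)) * K + δ / (2 * (K + 1)) = δ / 2 := by
            field_simp
          linarith [heq2.le]
  have hkey : ∀ i, lam * l01 (us i) + αs i * uu x y z i ≤ lam * l01 (uu x y z i) := by
    intro i
    by_cases hui : 0 < us i
    · have hαi : αs i = 0 := by
        by_contra h
        exact absurd (hcompl i h).2.1 (not_le.mpr hui)
      have hδle : δ ≤ us i / 2 := by
        have h1 : δ0 ≤ us i / 2 := by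
          have := Finset.inf'_le (f := fun i => if 0 < us i then us i / 2 else 1)
            (b := i) (Finset.mem_univ i)
          rwa [if_pos hui] at this
        exact le_trans (min_le_left _ _) h1
      have hzpos : 0 < uu x y z i := by
        have h1 := (abs_le.mp (hub i)).1
        linarith
      simp [l01, hui, hzpos, hαi]
    · push_neg at hui
      by_cases hzp : 0 < uu x y z i
      · have h1 : uu x y z i ≤ δ / 2 := by
          have := (abs_le.mp (hub i)).2
          linarith
        have h2 : αs i * uu x y z i ≤ lam := by
          have hδlam : δ ≤ lam / (A + 1) := min_le_right _ _
          have hA1 : (0:ℝ) < A + 1 := by linarith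
          calc αs i * uu x y z i ≤ A * (δ / 2) :=
                mul_le_mul (hαle i) h1 hzp.le hA0
            _ ≤ A * (lam / (A + 1)) := by
                apply mul_le_mul_of_nonneg_left _ hA0
                linarith
            _ ≤ lam := by
                rw [mul_div_assoc']
                rw [div_le_iff₀ hA1]
                nlinarith
        simp only [l01, if_pos hzp, if_neg (not_lt.mpr hui)]
        linarith
      · push_neg at hzp
        have h3 : αs i * uu x y z i ≤ 0 :=
          mul_nonpos_of_nonneg_of_nonpos (hpos i) hzp
        simp only [l01, if_neg (not_lt.mpr hui), if_neg (not_lt.mpr hzp)]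
        linarith
  have hsumkey : lam * (∑ i, l01 (us i)) + ∑ i, αs i * uu x y z i
      ≤ lam * ∑ i, l01 (uu x y z i) := by
    rw [Finset.mul_sum, Finset.mul_sum, ← Finset.sum_add_distrib]
    exact Finset.sum_le_sum fun i _ => hkey i
  have hF1 : F01 x y lam (ws, bs) = (1 / 2) * ‖ws‖ ^ 2 + lam * ∑ i, l01 (us i) := by
    unfold F01
    simp only [hus]
  have hF2 : F01 x y lam z = (1 / 2) * ‖z.1‖ ^ 2 + lam * ∑ i, l01 (uu x y z i) := rfl
  rw [hF1, hF2]
  have hαuz := hαu z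
  have hns : ‖z.1 - ws‖ ^ 2 = ‖z.1‖ ^ 2 - 2 * ⟪z.1, ws⟫ + ‖ws‖ ^ 2 :=
    norm_sub_sq_real z.1 ws
  nlinarith [sq_nonneg ‖z.1 - ws‖, hsumkey, hαuz, hnorm, hns]

end
end

section
/- Let α* be a local minimizer of (D_{0/1}), let (u*, b*) satisfy (KKT-T*), and set w* := Σ_{i=1}^m α*_i y_i x_i, z* := (w*, b*), and I₀* := {i : u_i(z*) ≤ 0}. Let c* ∈ ℝ^m satisfy c*_i ≥ α*_i for all i ∈ I₀* and c*_i = α*_i for all i ∉ I₀*. Then z* is a global minimizer of the hinge-loss SVM objective z ↦ F₁(z, c*). -/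
open scoped RealInnerProductSpace BigOperators

noncomputable section

variable {n m : ℕ}

/-- with `c*_i ≥ α*_i` on `I₀*` and `c*_i = α*_i` off `I₀*`,
`z* = (w*, b*)` is a global minimizer of the hinge-loss objective `z ↦ F₁(z, c*)`. -/
theorem stmt4 {n m : ℕ} (hn : 0 < n) (hm : 0 < m)
    (x : Fin m → EuclideanSpace ℝ (Fin n)) (y : Fin m → ℝ)
    (hy : ∀ i, y i = 1 ∨ y i = -1)
    (μ : ℝ) (hμ : 0 < μ)
    (αs us : EuclideanSpace ℝ (Fin m)) (bs : ℝ)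
    (hloc : DLocalMin x y μ αs)
    (hkkt : KKTT x y αs us bs)
    (ws : EuclideanSpace ℝ (Fin n)) (hws : ws = ∑ i, (αs i * y i) • x i)
    (cs : EuclideanSpace ℝ (Fin m))
    (hcs : ∀ i, (uu x y (ws, bs) i ≤ 0 → αs i ≤ cs i) ∧
      (¬ uu x y (ws, bs) i ≤ 0 → cs i = αs i)) :
    ∀ z : EuclideanSpace ℝ (Fin n) × ℝ, F1 x y cs (ws, bs) ≤ F1 x y cs z := by
  obtain ⟨⟨hpos, hyα⟩, -⟩ := hloc
  obtain ⟨hQ, hcomp, -⟩ := hkkt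
  -- ⟪ws, x i⟫ expansion
  have hinner : ∀ w : EuclideanSpace ℝ (Fin n),
      ⟪w, ws⟫ = ∑ j, (αs j * y j) * ⟪w, x j⟫ := by
    intro w
    rw [hws, inner_sum]
    exact Finset.sum_congr rfl fun j _ => real_inner_smul_right _ _ _
  -- us i equals the residual at z*
  have hus : ∀ i, us i = uu x y (ws, bs) i := by
    intro i
    have h := hQ i
    have h2 : (∑ j, (y i * y j * ⟪x i, x j⟫) * αs j) = y i * ⟪ws, x i⟫ := by
      rw [real_inner_comm, hinner, Finset.mul_sum]
      refine Finset.sum_congr rfl fun j _ => ?_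
      ring
    rw [h2] at h
    simp only [uu]
    nlinarith [h]
  have hαu : ∀ i, αs i * us i = 0 := by
    intro i
    by_cases h : αs i = 0
    · simp [h]
    · exact (hcomp i h).2.2
  have hα0 : ∀ i, ¬ uu x y (ws, bs) i ≤ 0 → αs i = 0 := by
    intro i h
    by_contra hne
    exact h ((hus i) ▸ (hcomp i hne).2.1)
  have hαc : ∀ i, αs i ≤ cs i := by
    intro i
    by_cases h : uu x y (ws, bs) i ≤ 0
    · exact (hcs i).1 h
    · rw [(hcs i).2 h]
  -- hinge terms vanish at z*
  have hF1s : F1 x y cs (ws, bs) = (1 / 2) * ‖ws‖ ^ 2 := by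
    simp only [F1]
    have : ∀ i ∈ Finset.univ, cs i * max (uu x y (ws, bs) i) 0 = 0 := by
      intro i _
      by_cases h : uu x y (ws, bs) i ≤ 0
      · rw [max_eq_right h, mul_zero]
      · rw [(hcs i).2 h, hα0 i h, zero_mul]
    rw [Finset.sum_congr rfl this]
    simp
  -- ‖ws‖² = ∑ αs i
  have hyws : ∀ i, y i * ⟪ws, x i⟫ = 1 - us i - bs * y i := by
    intro i
    have h := hus i
    simp only [uu] at h
    nlinarith [h]
  have hwn : ‖ws‖ ^ 2 = ∑ i, αs i := by
    have h1 : ‖ws‖ ^ 2 = ⟪ws, ws⟫ := (real_inner_self_eq_norm_sq ws).symm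
    rw [h1, hinner ws]
    have : ∀ i ∈ Finset.univ, (αs i * y i) * ⟪ws, x i⟫
        = αs i - αs i * us i - bs * (y i * αs i) := by
      intro i _
      linear_combination (αs i) * hyws i
    rw [Finset.sum_congr rfl this]
    rw [Finset.sum_sub_distrib, Finset.sum_sub_distrib, ← Finset.mul_sum]
    simp [hyα, fun i => hαu i]
  -- main argument
  rintro ⟨w, b⟩
  have key : ∀ i ∈ Finset.univ,
      αs i * uu x y (w, b) i ≤ cs i * max (uu x y (w, b) i) 0 := by
    intro i _
    rcases le_or_gt (uu x y (w, b) i) 0 with h | h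
    · rw [max_eq_right h]
      have := mul_nonpos_of_nonneg_of_nonpos (hpos i) h
      linarith
    · rw [max_eq_left h.le]
      exact mul_le_mul_of_nonneg_right (hαc i) h.le
  have hsum : ∑ i, αs i * uu x y (w, b) i = ∑ i, αs i - ⟪w, ws⟫ := by
    rw [hinner w]
    have : ∀ i ∈ Finset.univ, αs i * uu x y (w, b) i
        = αs i - (αs i * y i) * ⟪w, x i⟫ - b * (y i * αs i) := by
      intro i _
      simp only [uu]
      ring
    rw [Finset.sum_congr rfl this]
    rw [Finset.sum_sub_distrib, Finset.sum_sub_distrib, ← Finset.mul_sum]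
    simp [hyα]
  have hlb : ∑ i, αs i * uu x y (w, b) i ≤ ∑ i, cs i * max (uu x y (w, b) i) 0 :=
    Finset.sum_le_sum key
  have hsq : (0:ℝ) ≤ ‖w - ws‖ ^ 2 := sq_nonneg _
  have hexp : ‖w - ws‖ ^ 2 = ‖w‖ ^ 2 - 2 * ⟪w, ws⟫ + ‖ws‖ ^ 2 := by
    rw [@norm_sub_sq_real]
  rw [hF1s]
  simp only [F1]
  nlinarith [hlb, hsum, hwn, hsq, hexp]

end
end

section
/- Suppose: α* is a local minimizer of (D_{0/1}); (u*, b*) satisfies (KKT-T*); w* := Σ_{i=1}^m α*_i y_i x_i, z* := (w*, b*), I₀* := {i : u_i(z*) ≤ 0}; c* ∈ ℝ^m satisfies c*_i > α*_i for i ∈ I₀* and c*_i = α*_i for i ∉ I₀*; and both sets {i : u_i(z*) ≤ 0, y_i = 1} and {i : u_i(z*) ≤ 0, y_i = −1} are nonempty. Then there exists ε* > 0 such that for every β ∈ ℝ, the set {(z, c) ∈ (ℝ^n × ℝ) × ℝ^m : c ≥ 0 componentwise, ‖c − c*‖ ≤ ε*, F₁(z, c) ≤ β} is bounded. -/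
open scoped RealInnerProductSpace BigOperators

noncomputable section

variable {n m : ℕ}

lemma coord_abs_le_norm {m : ℕ} (v : EuclideanSpace ℝ (Fin m)) (i : Fin m) :
    |v i| ≤ ‖v‖ := by
  rw [EuclideanSpace.norm_eq]
  have h1 : |v i| = Real.sqrt (‖v i‖ ^ 2) := by
    rw [Real.sqrt_sq_eq_abs, Real.norm_eq_abs, abs_abs]
  rw [h1]
  apply Real.sqrt_le_sqrt
  exact Finset.single_le_sum (f := fun j => ‖v j‖ ^ 2) (fun j _ => sq_nonneg _) (Finset.mem_univ i)

lemma coord_dist_le {m : ℕ} (c cs : EuclideanSpace ℝ (Fin m)) (i : Fin m) :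
    |c i - cs i| ≤ dist c cs := by
  have h : (c - cs) i = c i - cs i := rfl
  rw [dist_eq_norm, ← h]
  exact coord_abs_le_norm _ i

/-- under the strict weight condition and Assumption 1, there is `ε* > 0`
such that for every `β` the set
`{(z, c) : c ≥ 0, ‖c - c*‖ ≤ ε*, F₁(z, c) ≤ β}` is bounded. -/
theorem stmt5 {n m : ℕ} (hn : 0 < n) (hm : 0 < m)
    (x : Fin m → EuclideanSpace ℝ (Fin n)) (y : Fin m → ℝ)
    (hy : ∀ i, y i = 1 ∨ y i = -1)
    (μ : ℝ) (hμ : 0 < μ)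
    (αs us : EuclideanSpace ℝ (Fin m)) (bs : ℝ)
    (hloc : DLocalMin x y μ αs)
    (hkkt : KKTT x y αs us bs)
    (ws : EuclideanSpace ℝ (Fin n)) (hws : ws = ∑ i, (αs i * y i) • x i)
    (cs : EuclideanSpace ℝ (Fin m))
    (hcs : ∀ i, (uu x y (ws, bs) i ≤ 0 → αs i < cs i) ∧
      (¬ uu x y (ws, bs) i ≤ 0 → cs i = αs i))
    (hS : (∃ i, uu x y (ws, bs) i ≤ 0 ∧ y i = 1) ∧
      (∃ i, uu x y (ws, bs) i ≤ 0 ∧ y i = -1)) :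
    ∃ ε > 0, ∀ β : ℝ, Bornology.IsBounded
      {p : (EuclideanSpace ℝ (Fin n) × ℝ) × EuclideanSpace ℝ (Fin m) |
        (∀ i, 0 ≤ p.2 i) ∧ dist p.2 cs ≤ ε ∧ F1 x y p.2 p.1 ≤ β} := by
  obtain ⟨⟨ip, hup, hyp⟩, ⟨im, hum, hym⟩⟩ := hS
  have hα : ∀ i, 0 ≤ αs i := hloc.1.1
  have hcp : 0 < cs ip := lt_of_le_of_lt (hα ip) ((hcs ip).1 hup)
  have hcm : 0 < cs im := lt_of_le_of_lt (hα im) ((hcs im).1 hum)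
  set ε := min (cs ip) (cs im) / 2 with hε
  have hεpos : 0 < ε := by
    have : 0 < min (cs ip) (cs im) := lt_min hcp hcm
    positivity
  refine ⟨ε, hεpos, fun β => ?_⟩
  rw [isBounded_iff_forall_norm_le]
  set W := Real.sqrt (2 * β) with hW
  set B := β / ε + 1 + W * ‖x ip‖ + W * ‖x im‖ with hB
  refine ⟨max (max W B) (‖cs‖ + ε), ?_⟩
  rintro ⟨⟨w, b⟩, c⟩ ⟨hc0, hcd, hF⟩
  have hterm_nn : ∀ j ∈ Finset.univ, 0 ≤ c j * max (uu x y (w, b) j) 0 :=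
    fun j _ => mul_nonneg (hc0 j) (le_max_right _ _)
  have hSnn : 0 ≤ ∑ i, c i * max (uu x y (w, b) i) 0 := Finset.sum_nonneg hterm_nn
  have hF' : (1 / 2) * ‖w‖ ^ 2 + ∑ i, c i * max (uu x y (w, b) i) 0 ≤ β := hF
  have hwsq : 0 ≤ ‖w‖ ^ 2 := sq_nonneg _
  have hw2 : ‖w‖ ^ 2 ≤ 2 * β := by linarith
  have hWle : ‖w‖ ≤ W := by
    rw [hW]
    exact (Real.le_sqrt (norm_nonneg w) (by linarith)).2 hw2
  have hW0 : 0 ≤ W := Real.sqrt_nonneg _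
  have hterm : ∀ i, c i * max (uu x y (w, b) i) 0 ≤ β := by
    intro i
    have h1 := Finset.single_le_sum hterm_nn (Finset.mem_univ i)
    linarith
  -- coordinates of c near cs
  have hclo : ∀ i, cs i - ε ≤ c i := by
    intro i
    have h1 := coord_dist_le c cs i
    have := abs_le.1 (h1.trans hcd)
    linarith [this.1]
  have hcip : ε ≤ c ip := by
    have h2 : 2 * ε ≤ cs ip := by
      rw [hε]; have := min_le_left (cs ip) (cs im); linarith
    linarith [hclo ip]
  have hcim : ε ≤ c im := by
    have h2 : 2 * ε ≤ cs im := by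
      rw [hε]; have := min_le_right (cs ip) (cs im); linarith
    linarith [hclo im]
  -- margin bounds via β / ε
  have hmarg : ∀ i, ε ≤ c i → uu x y (w, b) i ≤ β / ε := by
    intro i hci
    have hM : 0 ≤ max (uu x y (w, b) i) 0 := le_max_right _ _
    have h1 : ε * max (uu x y (w, b) i) 0 ≤ β := by
      calc ε * max (uu x y (w, b) i) 0 ≤ c i * max (uu x y (w, b) i) 0 :=
            mul_le_mul_of_nonneg_right hci hM
        _ ≤ β := hterm i
    have h2 : max (uu x y (w, b) i) 0 ≤ β / ε := by
      rw [le_div_iff₀ hεpos]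
      linarith [h1]
    exact (le_max_left _ _).trans h2
  have hmp := hmarg ip hcip
  have hmm := hmarg im hcim
  have hip : |⟪w, x ip⟫| ≤ W * ‖x ip‖ := by
    calc |⟪w, x ip⟫| ≤ ‖w‖ * ‖x ip‖ := abs_real_inner_le_norm w (x ip)
      _ ≤ W * ‖x ip‖ := mul_le_mul_of_nonneg_right hWle (norm_nonneg _)
  have him : |⟪w, x im⟫| ≤ W * ‖x im‖ := by
    calc |⟪w, x im⟫| ≤ ‖w‖ * ‖x im‖ := abs_real_inner_le_norm w (x im)
      _ ≤ W * ‖x im‖ := mul_le_mul_of_nonneg_right hWle (norm_nonneg _)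
  have hβ0 : 0 ≤ β := by linarith
  have hβε : 0 ≤ β / ε := div_nonneg hβ0 hεpos.le
  have habsip := abs_le.1 hip
  have habsim := abs_le.1 him
  have hbb : |b| ≤ B := by
    rw [abs_le]
    constructor
    · -- lower bound from ip, y ip = 1
      have : 1 - 1 * (⟪w, x ip⟫ + b) ≤ β / ε := by
        have := hmp; unfold uu at this; rw [hyp] at this; simpa using this
      have h0 : 0 ≤ W * ‖x ip‖ := mul_nonneg hW0 (norm_nonneg _)
      have h0' : 0 ≤ W * ‖x im‖ := mul_nonneg hW0 (norm_nonneg _)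
      rw [hB]
      linarith [habsip.2]
    · -- upper bound from im, y im = -1
      have : 1 - (-1) * (⟪w, x im⟫ + b) ≤ β / ε := by
        have := hmm; unfold uu at this; rw [hym] at this; simpa using this
      have h0 : 0 ≤ W * ‖x ip‖ := mul_nonneg hW0 (norm_nonneg _)
      rw [hB]
      linarith [habsim.1]
  have hcnorm : ‖c‖ ≤ ‖cs‖ + ε := by
    have h1 : ‖c‖ - ‖cs‖ ≤ ‖c - cs‖ := norm_sub_norm_le c cs
    rw [← dist_eq_norm] at h1
    linarith
  have hnp : ‖(((w, b), c) : (EuclideanSpace ℝ (Fin n) × ℝ) × EuclideanSpace ℝ (Fin m))‖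
      = max (max ‖w‖ |b|) ‖c‖ := by
    simp [Prod.norm_def, Real.norm_eq_abs]
  rw [hnp]
  apply max_le
  · apply max_le
    · exact hWle.trans (le_max_of_le_left (le_max_left _ _))
    · exact hbb.trans (le_max_of_le_left (le_max_right _ _))
  · exact hcnorm.trans (le_max_right _ _)

end
end

section
/- Suppose: α* is a local minimizer of (D_{0/1}); (u*, b*) satisfies (KKT-T*); w* := Σ_{i=1}^m α*_i y_i x_i, z* := (w*, b*), I₀* := {i : u_i(z*) ≤ 0}; c* ∈ ℝ^m satisfies c*_i > α*_i for i ∈ I₀* and c*_i = α*_i for i ∉ I₀*; and both sets {i : u_i(z*) ≤ 0, y_i = 1} and {i : u_i(z*) ≤ 0, y_i = −1} are nonempty. Then z* is the unique global minimizer of the hinge-loss SVM objective z ↦ F₁(z, c*). -/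
/-!
With `w* = Σ αᵢ yᵢ xᵢ` and `Σ yᵢ αᵢ = 0`, the hinge objective splits as
`F₁(z, c) = (Σ αᵢ - ‖w*‖²/2) + ‖w - w*‖²/2 + Σ (cᵢ (uᵢ(z))₊ - αᵢ uᵢ(z))`.
Each slack is nonnegative since `0 ≤ α ≤ c`, and by complementary slackness all of them vanish
at `z*`, so `z*` is a global minimizer. At another minimizer the quadratic term forces `w = w*`,
and the slack of a support vector `k` (one exists by the assumption on both classes) vanishes
only at `uₖ(z) = 0 = uₖ(z*)`, because `0 < αₖ < cₖ`; this forces `b = b*`.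
-/

open scoped RealInnerProductSpace BigOperators

noncomputable section

variable {n m : ℕ}

theorem mul_le_mul_max_zero {a c u : ℝ} (ha : 0 ≤ a) (hac : a ≤ c) : a * u ≤ c * max u 0 :=
  calc a * u ≤ a * max u 0 := mul_le_mul_of_nonneg_left (le_max_left _ _) ha
    _ ≤ c * max u 0 := mul_le_mul_of_nonneg_right hac (le_max_right _ _)

theorem eq_zero_of_mul_max_zero_eq {a c u : ℝ} (ha : 0 < a) (hac : a < c)
    (h : c * max u 0 = a * u) : u = 0 := by
  rcases le_total u 0 with hu | hu
  · rw [max_eq_right hu, mul_zero] at h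
    exact (mul_eq_zero.mp h.symm).resolve_left ha.ne'
  · rw [max_eq_left hu] at h
    exact (mul_eq_zero.mp (by linarith : (c - a) * u = 0)).resolve_left (by linarith)

section HingeDuality

variable (x : Fin m → EuclideanSpace ℝ (Fin n)) (y : Fin m → ℝ)

def svmWeight (α : EuclideanSpace ℝ (Fin m)) : EuclideanSpace ℝ (Fin n) :=
  ∑ i, (α i * y i) • x i

variable {x y}

theorem inner_svmWeight (v : EuclideanSpace ℝ (Fin n)) (α : EuclideanSpace ℝ (Fin m)) :
    ⟪v, svmWeight x y α⟫ = ∑ i, α i * y i * ⟪v, x i⟫ := by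
  simp only [svmWeight, inner_sum, real_inner_smul_right]

theorem sum_mul_uu {α : EuclideanSpace ℝ (Fin m)} (hα : ∑ i, y i * α i = 0)
    (z : EuclideanSpace ℝ (Fin n) × ℝ) :
    ∑ i, α i * uu x y z i = ∑ i, α i - ⟪z.1, svmWeight x y α⟫ := by
  have hterm : ∀ i, α i * uu x y z i = α i - α i * y i * ⟪z.1, x i⟫ - z.2 * (y i * α i) :=
    fun i => by simp only [uu]; ring
  simp only [hterm, Finset.sum_sub_distrib, ← Finset.mul_sum, hα, mul_zero, sub_zero,
    inner_svmWeight]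

theorem F1_eq_dual_add_slack {α : EuclideanSpace ℝ (Fin m)} (hα : ∑ i, y i * α i = 0)
    (c : EuclideanSpace ℝ (Fin m)) (z : EuclideanSpace ℝ (Fin n) × ℝ) :
    F1 x y c z = ∑ i, α i - (1 / 2) * ‖svmWeight x y α‖ ^ 2
      + (1 / 2) * ‖z.1 - svmWeight x y α‖ ^ 2
      + ∑ i, (c i * max (uu x y z i) 0 - α i * uu x y z i) := by
  rw [Finset.sum_sub_distrib, sum_mul_uu hα, norm_sub_sq_real, F1]
  ring

namespace KKTT

variable {α us : EuclideanSpace ℝ (Fin m)} {b : ℝ}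

theorem nonneg (h : KKTT x y α us b) (i : Fin m) : 0 ≤ α i := by
  by_cases hi : α i = 0
  · exact hi.ge
  · exact (h.2.1 i hi).1

theorem uu_eq (h : KKTT x y α us b) (i : Fin m) : uu x y (svmWeight x y α, b) i = us i := by
  have hQ : ∑ j, y i * y j * ⟪x i, x j⟫ * α j = y i * ⟪svmWeight x y α, x i⟫ := by
    rw [real_inner_comm, inner_svmWeight, Finset.mul_sum]
    exact Finset.sum_congr rfl fun j _ => by rw [real_inner_comm]; ring
  have := h.1 i
  rw [hQ] at this
  simp only [uu]
  linarith

theorem uu_eq_zero (h : KKTT x y α us b) {i : Fin m} (hi : α i ≠ 0) :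
    uu x y (svmWeight x y α, b) i = 0 := by
  rw [h.uu_eq]
  exact (mul_eq_zero.mp (h.2.1 i hi).2.2).resolve_left hi

theorem slack_eq_zero (h : KKTT x y α us b) {c : EuclideanSpace ℝ (Fin m)}
    (hc : ∀ i, ¬ uu x y (svmWeight x y α, b) i ≤ 0 → c i = α i) (i : Fin m) :
    c i * max (uu x y (svmWeight x y α, b) i) 0 - α i * uu x y (svmWeight x y α, b) i = 0 := by
  by_cases hu : uu x y (svmWeight x y α, b) i ≤ 0
  · by_cases hi : α i = 0
    · simp [max_eq_right hu, hi]
    · simp [h.uu_eq_zero hi]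
  · rw [max_eq_left (le_of_not_ge hu), hc i hu, sub_self]

theorem F1_eq_add_slack (h : KKTT x y α us b) {c : EuclideanSpace ℝ (Fin m)}
    (hc : ∀ i, ¬ uu x y (svmWeight x y α, b) i ≤ 0 → c i = α i)
    (z : EuclideanSpace ℝ (Fin n) × ℝ) :
    F1 x y c z = F1 x y c (svmWeight x y α, b) + (1 / 2) * ‖z.1 - svmWeight x y α‖ ^ 2
      + ∑ i, (c i * max (uu x y z i) 0 - α i * uu x y z i) := by
  rw [F1_eq_dual_add_slack h.2.2 c z, F1_eq_dual_add_slack h.2.2 c (svmWeight x y α, b),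
    Finset.sum_eq_zero fun i _ => h.slack_eq_zero hc i]
  simp

theorem F1_le (h : KKTT x y α us b) {c : EuclideanSpace ℝ (Fin m)} (hαc : ∀ i, α i ≤ c i)
    (heq : ∀ i, ¬ uu x y (svmWeight x y α, b) i ≤ 0 → c i = α i)
    (z : EuclideanSpace ℝ (Fin n) × ℝ) :
    F1 x y c (svmWeight x y α, b) ≤ F1 x y c z := by
  rw [h.F1_eq_add_slack heq z]
  have hsum := Finset.sum_nonneg fun i (_ : i ∈ Finset.univ) =>
    sub_nonneg.mpr (mul_le_mul_max_zero (u := uu x y z i) (h.nonneg i) (hαc i))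
  have hdist : 0 ≤ (1 / 2) * ‖z.1 - svmWeight x y α‖ ^ 2 := by positivity
  linarith

theorem eq_of_F1_le (h : KKTT x y α us b) {c : EuclideanSpace ℝ (Fin m)} (hαc : ∀ i, α i ≤ c i)
    (heq : ∀ i, ¬ uu x y (svmWeight x y α, b) i ≤ 0 → c i = α i)
    {k : Fin m} (hk : α k ≠ 0) (hck : α k < c k) {z : EuclideanSpace ℝ (Fin n) × ℝ}
    (hz : F1 x y c z ≤ F1 x y c (svmWeight x y α, b)) :
    z = (svmWeight x y α, b) := by
  have hslack : ∀ i, 0 ≤ c i * max (uu x y z i) 0 - α i * uu x y z i := fun i =>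
    sub_nonneg.mpr (mul_le_mul_max_zero (h.nonneg i) (hαc i))
  have hsum := Finset.sum_nonneg fun i (_ : i ∈ Finset.univ) => hslack i
  have hdist : 0 ≤ (1 / 2) * ‖z.1 - svmWeight x y α‖ ^ 2 := by positivity
  rw [h.F1_eq_add_slack heq z] at hz
  have hw : z.1 = svmWeight x y α := by
    have : ‖z.1 - svmWeight x y α‖ ^ 2 = 0 := by linarith
    simpa [sub_eq_zero] using this
  have hk0 := h.uu_eq_zero hk
  have hzk : uu x y z k = 0 := by
    refine eq_zero_of_mul_max_zero_eq (lt_of_le_of_ne (h.nonneg k) (Ne.symm hk)) hck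
      (sub_eq_zero.mp ?_)
    exact (Finset.sum_eq_zero_iff_of_nonneg fun i _ => hslack i).mp (by linarith) k
      (Finset.mem_univ k)
  obtain ⟨w', b'⟩ := z
  subst hw
  have hyk : y k ≠ 0 := by
    rintro hy
    simp [uu, hy] at hk0
  have : y k * (b' - b) = 0 := by
    simp only [uu] at hzk hk0
    linarith
  simpa [sub_eq_zero] using (mul_eq_zero.mp this).resolve_left hyk

end KKTT

/-- With `α = 0` the weight vanishes and `uᵢ = 1 - yᵢ b`, so margin points of both classes
would need `b ≥ 1` and `b ≤ -1`. -/
theorem exists_ne_zero_of_margin_both_classes {α : EuclideanSpace ℝ (Fin m)} {b : ℝ}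
    (hS : (∃ i, uu x y (svmWeight x y α, b) i ≤ 0 ∧ y i = 1) ∧
      (∃ i, uu x y (svmWeight x y α, b) i ≤ 0 ∧ y i = -1)) :
    ∃ k, α k ≠ 0 := by
  by_contra! hα
  have hw : svmWeight x y α = 0 := Finset.sum_eq_zero fun i _ => by simp [hα i]
  obtain ⟨⟨i, hi, hyi⟩, ⟨j, hj, hyj⟩⟩ := hS
  simp only [uu, hw, inner_zero_left, zero_add, hyi, hyj] at hi hj
  linarith

end HingeDuality

theorem stmt6_general {n m : ℕ}
    (x : Fin m → EuclideanSpace ℝ (Fin n)) (y : Fin m → ℝ)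
    (αs us : EuclideanSpace ℝ (Fin m)) (bs : ℝ)
    (hkkt : KKTT x y αs us bs)
    (ws : EuclideanSpace ℝ (Fin n)) (hws : ws = ∑ i, (αs i * y i) • x i)
    (cs : EuclideanSpace ℝ (Fin m))
    (hcs : ∀ i, (uu x y (ws, bs) i ≤ 0 → αs i < cs i) ∧
      (¬ uu x y (ws, bs) i ≤ 0 → cs i = αs i))
    (hS : (∃ i, uu x y (ws, bs) i ≤ 0 ∧ y i = 1) ∧
      (∃ i, uu x y (ws, bs) i ≤ 0 ∧ y i = -1)) :
    (∀ z : EuclideanSpace ℝ (Fin n) × ℝ, F1 x y cs (ws, bs) ≤ F1 x y cs z) ∧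
    (∀ z : EuclideanSpace ℝ (Fin n) × ℝ, F1 x y cs z ≤ F1 x y cs (ws, bs) →
      z = (ws, bs)) := by
  obtain ⟨hlt, heq⟩ := forall_and.mp hcs
  change ws = svmWeight x y αs at hws
  subst hws
  have hαc : ∀ i, αs i ≤ cs i := fun i => by
    by_cases hu : uu x y (svmWeight x y αs, bs) i ≤ 0
    · exact (hlt i hu).le
    · exact (heq i hu).ge
  obtain ⟨k, hk⟩ := exists_ne_zero_of_margin_both_classes hS
  have hck := hlt k (hkkt.uu_eq_zero hk).le
  exact ⟨hkkt.F1_le hαc heq, fun z hz => hkkt.eq_of_F1_le hαc heq hk hck hz⟩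

/-- under the strict weight condition and Assumption 1,
`z* = (w*, b*)` is the unique global minimizer of `z ↦ F₁(z, c*)`. -/
theorem stmt6 {n m : ℕ} (hn : 0 < n) (hm : 0 < m)
    (x : Fin m → EuclideanSpace ℝ (Fin n)) (y : Fin m → ℝ)
    (hy : ∀ i, y i = 1 ∨ y i = -1)
    (μ : ℝ) (hμ : 0 < μ)
    (αs us : EuclideanSpace ℝ (Fin m)) (bs : ℝ)
    (hloc : DLocalMin x y μ αs)
    (hkkt : KKTT x y αs us bs)
    (ws : EuclideanSpace ℝ (Fin n)) (hws : ws = ∑ i, (αs i * y i) • x i)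
    (cs : EuclideanSpace ℝ (Fin m))
    (hcs : ∀ i, (uu x y (ws, bs) i ≤ 0 → αs i < cs i) ∧
      (¬ uu x y (ws, bs) i ≤ 0 → cs i = αs i))
    (hS : (∃ i, uu x y (ws, bs) i ≤ 0 ∧ y i = 1) ∧
      (∃ i, uu x y (ws, bs) i ≤ 0 ∧ y i = -1)) :
    (∀ z : EuclideanSpace ℝ (Fin n) × ℝ, F1 x y cs (ws, bs) ≤ F1 x y cs z) ∧
    (∀ z : EuclideanSpace ℝ (Fin n) × ℝ, F1 x y cs z ≤ F1 x y cs (ws, bs) →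
      z = (ws, bs)) :=
  stmt6_general x y αs us bs hkkt ws hws cs hcs hS

end
end

section
/- Suppose: α* is a local minimizer of (D_{0/1}); (u*, b*) satisfies (KKT-T*); w* := Σ_{i=1}^m α*_i y_i x_i, z* := (w*, b*), I₀* := {i : u_i(z*) ≤ 0}; c* ∈ ℝ^m satisfies c*_i > α*_i for i ∈ I₀* and c*_i = α*_i for i ∉ I₀*; and both sets {i : u_i(z*) ≤ 0, y_i = 1} and {i : u_i(z*) ≤ 0, y_i = −1} are nonempty. Let (c^ν)_{ν∈ℕ} ⊆ ℝ^m be a sequence with c^ν_i > 0 for all i and ν, such that c^ν → c* as ν → ∞, and for each ν let z^ν be a global minimizer of z ↦ F₁(z, c^ν). Then z^ν → z* as ν → ∞. -/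
open scoped RealInnerProductSpace BigOperators

noncomputable section

variable {n m : ℕ}

open Filter in
lemma uu_shift (x : Fin m → EuclideanSpace ℝ (Fin n)) (y : Fin m → ℝ)
    (z z' : EuclideanSpace ℝ (Fin n) × ℝ) (i : Fin m) :
    uu x y z i = uu x y z' i - y i * ⟪z.1 - z'.1, x i⟫ - y i * (z.2 - z'.2) := by
  simp only [uu, inner_sub_left]; ring

lemma key_ineq (x : Fin m → EuclideanSpace ℝ (Fin n)) (y : Fin m → ℝ)
    (αs : EuclideanSpace ℝ (Fin m)) (hα0 : ∀ i, 0 ≤ αs i)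
    (hαy : ∑ i, y i * αs i = 0)
    (ws : EuclideanSpace ℝ (Fin n)) (bs : ℝ)
    (hws : ws = ∑ i, (αs i * y i) • x i)
    (hcomp : ∀ i, αs i * uu x y (ws, bs) i = 0)
    (c : EuclideanSpace ℝ (Fin m)) (hc : ∀ i, αs i ≤ c i)
    (ip iq : Fin m) (hne : ip ≠ iq)
    (z : EuclideanSpace ℝ (Fin n) × ℝ) :
    (1/2) * ‖ws‖^2 + (1/2) * ‖z.1 - ws‖^2
      + (c ip - αs ip) * max (uu x y z ip) 0
      + (c iq - αs iq) * max (uu x y z iq) 0 ≤ F1 x y c z := by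
  have hmax : ∀ i, (0:ℝ) ≤ max (uu x y z i) 0 := fun i => le_max_right _ _
  have hsplit : ∑ i, c i * max (uu x y z i) 0
      = ∑ i, αs i * max (uu x y z i) 0 + ∑ i, (c i - αs i) * max (uu x y z i) 0 := by
    rw [← Finset.sum_add_distrib]
    exact Finset.sum_congr rfl fun i _ => by ring
  have h1 : (c ip - αs ip) * max (uu x y z ip) 0 + (c iq - αs iq) * max (uu x y z iq) 0
      ≤ ∑ i, (c i - αs i) * max (uu x y z i) 0 := by
    have hp := Finset.sum_pair (f := fun i => (c i - αs i) * max (uu x y z i) 0) hne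
    rw [← hp]
    exact Finset.sum_le_sum_of_subset_of_nonneg (Finset.subset_univ _)
      (fun i _ _ => mul_nonneg (by linarith [hc i]) (hmax i))
  have h2 : ∑ i, αs i * uu x y z i ≤ ∑ i, αs i * max (uu x y z i) 0 :=
    Finset.sum_le_sum fun i _ => mul_le_mul_of_nonneg_left (le_max_left _ _) (hα0 i)
  have h3 : ∑ i, αs i * uu x y z i = -⟪z.1 - ws, ws⟫ := by
    have e1 : ∀ i, αs i * uu x y z i
        = αs i * uu x y (ws, bs) i - αs i * y i * ⟪z.1 - ws, x i⟫
          - (y i * αs i) * (z.2 - bs) := by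
      intro i; rw [uu_shift x y z (ws, bs) i]; ring
    rw [Finset.sum_congr rfl fun i _ => e1 i]
    rw [Finset.sum_sub_distrib, Finset.sum_sub_distrib]
    have e2 : ∑ i, αs i * uu x y (ws, bs) i = 0 := Finset.sum_eq_zero fun i _ => hcomp i
    have e3' : ∀ v : EuclideanSpace ℝ (Fin n), ∑ i, αs i * y i * ⟪v, x i⟫ = ⟪v, ws⟫ := by
      intro v; rw [hws, inner_sum]
      exact Finset.sum_congr rfl fun i _ => (real_inner_smul_right _ _ _).symm
    have e3 := e3' (z.1 - ws)
    have e4 : ∑ i, (y i * αs i) * (z.2 - bs) = 0 := by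
      rw [← Finset.sum_mul, hαy, zero_mul]
    rw [e2, e3, e4]; ring
  have h4 : ‖z.1‖^2 = ‖ws‖^2 + 2 * ⟪ws, z.1 - ws⟫ + ‖z.1 - ws‖^2 := by
    have h := norm_add_sq_real ws (z.1 - ws)
    have : ws + (z.1 - ws) = z.1 := by abel
    rwa [this] at h
  have h5 : ⟪z.1 - ws, ws⟫ = ⟪ws, z.1 - ws⟫ := real_inner_comm _ _
  simp only [F1]
  rw [hsplit]
  linarith

/-- if positive weights `c^ν → c*` and `z^ν` globally minimizes
`F₁(·, c^ν)`, then `z^ν → z*`. -/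
theorem stmt7 {n m : ℕ} (hn : 0 < n) (hm : 0 < m)
    (x : Fin m → EuclideanSpace ℝ (Fin n)) (y : Fin m → ℝ)
    (hy : ∀ i, y i = 1 ∨ y i = -1)
    (μ : ℝ) (hμ : 0 < μ)
    (αs us : EuclideanSpace ℝ (Fin m)) (bs : ℝ)
    (hloc : DLocalMin x y μ αs)
    (hkkt : KKTT x y αs us bs)
    (ws : EuclideanSpace ℝ (Fin n)) (hws : ws = ∑ i, (αs i * y i) • x i)
    (cs : EuclideanSpace ℝ (Fin m))
    (hcs : ∀ i, (uu x y (ws, bs) i ≤ 0 → αs i < cs i) ∧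
      (¬ uu x y (ws, bs) i ≤ 0 → cs i = αs i))
    (hS : (∃ i, uu x y (ws, bs) i ≤ 0 ∧ y i = 1) ∧
      (∃ i, uu x y (ws, bs) i ≤ 0 ∧ y i = -1))
    (cseq : ℕ → EuclideanSpace ℝ (Fin m))
    (hpos : ∀ ν i, 0 < cseq ν i)
    (hlim : Filter.Tendsto cseq Filter.atTop (nhds cs))
    (zseq : ℕ → EuclideanSpace ℝ (Fin n) × ℝ)
    (hmin : ∀ ν, ∀ z : EuclideanSpace ℝ (Fin n) × ℝ,
      F1 x y (cseq ν) (zseq ν) ≤ F1 x y (cseq ν) z) :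
    Filter.Tendsto zseq Filter.atTop (nhds (ws, bs)) := by
  obtain ⟨⟨hα0, hαy⟩, -⟩ := hloc
  obtain ⟨hkkt1, hkkt2, -⟩ := hkkt
  -- us agrees with the residual at z*
  have hwsi : ∀ i, ∑ j, (y i * y j * ⟪x i, x j⟫) * αs j = y i * ⟪ws, x i⟫ := by
    intro i
    rw [hws, sum_inner, Finset.mul_sum]
    refine Finset.sum_congr rfl fun j _ => ?_
    rw [real_inner_smul_left, real_inner_comm]
    ring
  have hus : ∀ i, us i = uu x y (ws, bs) i := by
    intro i
    have h := hkkt1 i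
    rw [hwsi i] at h
    simp only [uu]
    linear_combination h
  have hcomp : ∀ i, αs i * uu x y (ws, bs) i = 0 := by
    intro i
    by_cases h : αs i = 0
    · rw [h, zero_mul]
    · have := (hkkt2 i h).2.2; rwa [hus i] at this
  have hzero : ∀ i, ¬ uu x y (ws, bs) i ≤ 0 → αs i = 0 := by
    intro i h
    by_contra hne
    exact h (by rw [← hus i]; exact (hkkt2 i hne).2.1)
  -- α* is not identically zero
  have hαall : ¬ ∀ i, αs i = 0 := by
    intro h
    have hws0 : ws = 0 := by
      rw [hws]; exact Finset.sum_eq_zero fun i _ => by rw [h i, zero_mul, zero_smul]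
    obtain ⟨i1, hu1, hy1⟩ := hS.1
    obtain ⟨i2, hu2, hy2⟩ := hS.2
    simp only [uu, hws0, hy1, inner_zero_left] at hu1
    simp only [uu, hws0, hy2, inner_zero_left] at hu2
    linarith
  -- support points of both classes exist
  have hip : ∃ i, y i = 1 ∧ αs i ≠ 0 := by
    by_contra h
    push_neg at h
    apply hαall
    have key : ∀ i ∈ Finset.univ, (0:ℝ) ≤ -(y i * αs i) := by
      intro i _
      rcases hy i with h1 | h1
      · simp [h1, h i h1]
      · rw [h1]; have := hα0 i; linarith
    have hall := (Finset.sum_eq_zero_iff_of_nonneg key).1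
      (by rw [Finset.sum_neg_distrib, hαy, neg_zero])
    intro i
    have hi := hall i (Finset.mem_univ i)
    rcases hy i with h1 | h1
    · exact h i h1
    · rw [h1] at hi; linarith [hα0 i]
  have hiq : ∃ i, y i = -1 ∧ αs i ≠ 0 := by
    by_contra h
    push_neg at h
    apply hαall
    have key : ∀ i ∈ Finset.univ, (0:ℝ) ≤ y i * αs i := by
      intro i _
      rcases hy i with h1 | h1
      · rw [h1]; have := hα0 i; linarith
      · simp [h1, h i h1]
    have hall := (Finset.sum_eq_zero_iff_of_nonneg key).1 hαy
    intro i
    have hi := hall i (Finset.mem_univ i)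
    rcases hy i with h1 | h1
    · rw [h1] at hi; linarith
    · exact h i h1
  obtain ⟨ip, hyp, hαp⟩ := hip
  obtain ⟨iq, hyq, hαq⟩ := hiq
  have hne : ip ≠ iq := by intro h; rw [h, hyq] at hyp; norm_num at hyp
  have hup0 : uu x y (ws, bs) ip = 0 :=
    (mul_eq_zero.1 (hcomp ip)).resolve_left hαp
  have huq0 : uu x y (ws, bs) iq = 0 :=
    (mul_eq_zero.1 (hcomp iq)).resolve_left hαq
  have hgp : αs ip < cs ip := (hcs ip).1 (le_of_eq hup0)
  have hgq : αs iq < cs iq := (hcs iq).1 (le_of_eq huq0)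
  set a := min (cs ip - αs ip) (cs iq - αs iq) with ha_def
  have ha : 0 < a := lt_min (by linarith) (by linarith)
  set R := max ‖x ip‖ ‖x iq‖ with hR_def
  have hR : 0 ≤ R := le_trans (norm_nonneg _) (le_max_left _ _)
  set E : ℕ → ℝ := fun ν => ∑ i, cseq ν i * max (uu x y (ws, bs) i) 0 with hE_def
  have hci : ∀ i, Filter.Tendsto (fun ν => cseq ν i) Filter.atTop (nhds (cs i)) := by
    intro i
    exact ((EuclideanSpace.proj i :
      EuclideanSpace ℝ (Fin m) →L[ℝ] ℝ).continuous.tendsto cs).comp hlim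
  have hElim : Filter.Tendsto E Filter.atTop (nhds 0) := by
    have h1 : Filter.Tendsto (fun ν => ∑ i, cseq ν i * max (uu x y (ws, bs) i) 0)
        Filter.atTop (nhds (∑ i, cs i * max (uu x y (ws, bs) i) 0)) :=
      tendsto_finset_sum _ fun i _ => (hci i).mul_const _
    have h2 : ∑ i, cs i * max (uu x y (ws, bs) i) 0 = 0 := by
      refine Finset.sum_eq_zero fun i _ => ?_
      by_cases h : uu x y (ws, bs) i ≤ 0
      · rw [max_eq_right h, mul_zero]
      · rw [(hcs i).2 h, hzero i h, zero_mul]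
    rwa [h2] at h1
  have hev1 : ∀ᶠ ν in Filter.atTop, ∀ i, αs i ≤ cseq ν i := by
    rw [Filter.eventually_all]
    intro i
    by_cases h : uu x y (ws, bs) i ≤ 0
    · exact (hci i).eventually (eventually_ge_nhds ((hcs i).1 h))
    · exact Filter.Eventually.of_forall fun ν => by rw [hzero i h]; exact (hpos ν i).le
  have hevp : ∀ᶠ ν in Filter.atTop, a/2 ≤ cseq ν ip - αs ip := by
    have h : αs ip + a/2 < cs ip := by
      have := min_le_left (cs ip - αs ip) (cs iq - αs iq); rw [← ha_def] at this; linarith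
    exact ((hci ip).eventually (eventually_ge_nhds h)).mono fun ν hh => by linarith
  have hevq : ∀ᶠ ν in Filter.atTop, a/2 ≤ cseq ν iq - αs iq := by
    have h : αs iq + a/2 < cs iq := by
      have := min_le_right (cs ip - αs ip) (cs iq - αs iq); rw [← ha_def] at this; linarith
    exact ((hci iq).eventually (eventually_ge_nhds h)).mono fun ν hh => by linarith
  have hkey : ∀ᶠ ν in Filter.atTop, ‖(zseq ν).1 - ws‖^2 ≤ 2 * E ν ∧
      a * |(zseq ν).2 - bs| ≤ 4 * E ν + a * (R * ‖(zseq ν).1 - ws‖) := by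
    filter_upwards [hev1, hevp, hevq] with ν h1 h2 h3
    have hk := key_ineq x y αs hα0 hαy ws bs hws hcomp (cseq ν) h1 ip iq hne (zseq ν)
    have hle : F1 x y (cseq ν) (zseq ν) ≤ (1/2) * ‖ws‖^2 + E ν := hmin ν (ws, bs)
    have hmp : (0:ℝ) ≤ max (uu x y (zseq ν) ip) 0 := le_max_right _ _
    have hmq : (0:ℝ) ≤ max (uu x y (zseq ν) iq) 0 := le_max_right _ _
    have hgp' : a/2 * max (uu x y (zseq ν) ip) 0
        ≤ (cseq ν ip - αs ip) * max (uu x y (zseq ν) ip) 0 :=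
      mul_le_mul_of_nonneg_right h2 hmp
    have hgq' : a/2 * max (uu x y (zseq ν) iq) 0
        ≤ (cseq ν iq - αs iq) * max (uu x y (zseq ν) iq) 0 :=
      mul_le_mul_of_nonneg_right h3 hmq
    have h0p : (0:ℝ) ≤ a/2 * max (uu x y (zseq ν) ip) 0 := mul_nonneg (by linarith) hmp
    have h0q : (0:ℝ) ≤ a/2 * max (uu x y (zseq ν) iq) 0 := mul_nonneg (by linarith) hmq
    have hsq : (0:ℝ) ≤ ‖(zseq ν).1 - ws‖^2 := sq_nonneg _
    constructor
    · linarith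
    · have hap : a * max (uu x y (zseq ν) ip) 0 ≤ 2 * E ν := by linarith
      have haq : a * max (uu x y (zseq ν) iq) 0 ≤ 2 * E ν := by linarith
      have hup : uu x y (zseq ν) ip = -⟪(zseq ν).1 - ws, x ip⟫ - ((zseq ν).2 - bs) := by
        rw [uu_shift x y (zseq ν) (ws, bs) ip, hup0, hyp]; ring
      have huq : uu x y (zseq ν) iq = ⟪(zseq ν).1 - ws, x iq⟫ + ((zseq ν).2 - bs) := by
        rw [uu_shift x y (zseq ν) (ws, bs) iq, huq0, hyq]; ring
      have hip' : |⟪(zseq ν).1 - ws, x ip⟫| ≤ ‖(zseq ν).1 - ws‖ * R :=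
        le_trans (abs_real_inner_le_norm _ _)
          (mul_le_mul_of_nonneg_left (le_max_left _ _) (norm_nonneg _))
      have hiq' : |⟪(zseq ν).1 - ws, x iq⟫| ≤ ‖(zseq ν).1 - ws‖ * R :=
        le_trans (abs_real_inner_le_norm _ _)
          (mul_le_mul_of_nonneg_left (le_max_right _ _) (norm_nonneg _))
      have habsp := abs_le.1 hip'
      have habsq := abs_le.1 hiq'
      have hub1 : -((zseq ν).2 - bs) ≤ max (uu x y (zseq ν) ip) 0 + ‖(zseq ν).1 - ws‖ * R :=
        by linarith [le_max_left (uu x y (zseq ν) ip) 0, habsp.1, hup]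
      have hub2 : (zseq ν).2 - bs ≤ max (uu x y (zseq ν) iq) 0 + ‖(zseq ν).1 - ws‖ * R :=
        by linarith [le_max_left (uu x y (zseq ν) iq) 0, habsq.1, huq]
      have habs : |(zseq ν).2 - bs| ≤ max (uu x y (zseq ν) ip) 0 + max (uu x y (zseq ν) iq) 0
          + ‖(zseq ν).1 - ws‖ * R :=
        abs_le.2 ⟨by linarith, by linarith⟩
      have hmul := mul_le_mul_of_nonneg_left habs ha.le
      have hexp : a * (max (uu x y (zseq ν) ip) 0 + max (uu x y (zseq ν) iq) 0
          + ‖(zseq ν).1 - ws‖ * R)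
          = a * max (uu x y (zseq ν) ip) 0 + a * max (uu x y (zseq ν) iq) 0
            + a * (R * ‖(zseq ν).1 - ws‖) := by ring
      linarith
  have hEw : Filter.Tendsto (fun ν => ‖(zseq ν).1 - ws‖^2) Filter.atTop (nhds 0) :=
    squeeze_zero' (Filter.Eventually.of_forall fun ν => sq_nonneg _)
      (hkey.mono fun ν h => h.1) (by simpa using hElim.const_mul 2)
  have hwn : Filter.Tendsto (fun ν => ‖(zseq ν).1 - ws‖) Filter.atTop (nhds 0) := by
    have h := hEw.sqrt
    rw [Real.sqrt_zero] at h
    exact h.congr fun ν => Real.sqrt_sq (norm_nonneg _)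
  have hw : Filter.Tendsto (fun ν => (zseq ν).1) Filter.atTop (nhds ws) := by
    have h0 : Filter.Tendsto (fun ν => (zseq ν).1 - ws) Filter.atTop (nhds 0) :=
      tendsto_zero_iff_norm_tendsto_zero.2 hwn
    have := h0.add (tendsto_const_nhds (x := ws))
    simpa using this
  have hbn : Filter.Tendsto (fun ν => |(zseq ν).2 - bs|) Filter.atTop (nhds 0) := by
    refine squeeze_zero'
      (g := fun ν => (4 * E ν + a * (R * ‖(zseq ν).1 - ws‖)) / a)
      (Filter.Eventually.of_forall fun ν => abs_nonneg _)
      (hkey.mono fun ν h => ?_) ?_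
    · exact (le_div_iff₀ ha).2 (by rw [mul_comm]; exact h.2)
    · have := ((hElim.const_mul 4).add ((hwn.const_mul R).const_mul a)).div_const a
      simpa using this
  have hb : Filter.Tendsto (fun ν => (zseq ν).2) Filter.atTop (nhds bs) := by
    have h0 : Filter.Tendsto (fun ν => (zseq ν).2 - bs) Filter.atTop (nhds 0) := by
      refine tendsto_zero_iff_norm_tendsto_zero.2 ?_
      exact hbn.congr fun ν => (Real.norm_eq_abs _).symm
    have := h0.add (tendsto_const_nhds (x := bs))
    simpa using this
  have := hw.prodMk_nhds hb
  simpa using this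


end
end

section
/- For every γ > 0 and every t ∈ ℝ, the solution set T_γ(t) := argmin_{s∈ℝ} (|s − t| + γ ℓ_{0/1}(s)) is given by: T_γ(t) = {t} if t < 0 or t > γ; T_γ(t) = {0, γ} if t = γ; and T_γ(t) = {0} if 0 ≤ t < γ. -/
open scoped RealInnerProductSpace BigOperators

noncomputable section

variable {n m : ℕ}

/-- the argmin set `T_γ(t)` of `s ↦ |s - t| + γ ℓ_{0/1}(s)` equals `{t}`
if `t < 0` or `t > γ`, equals `{0, γ}` if `t = γ`, and equals `{0}` if `0 ≤ t < γ`. -/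
theorem stmt9 (γ : ℝ) (hγ : 0 < γ) (t : ℝ) :
    {s : ℝ | ∀ s' : ℝ, |s - t| + γ * l01 s ≤ |s' - t| + γ * l01 s'} =
      if t < 0 ∨ γ < t then {t} else if t = γ then ({0, γ} : Set ℝ) else {0} := by
  have hl0 : ∀ s : ℝ, s ≤ 0 → l01 s = 0 := fun s h => if_neg (not_lt.2 h)
  have hl1 : ∀ s : ℝ, 0 < s → l01 s = 1 := fun s h => if_pos h
  have hln : ∀ s : ℝ, 0 ≤ l01 s := by intro s; unfold l01; split <;> norm_num
  ext s
  simp only [Set.mem_setOf_eq]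
  split_ifs with h1 h2
  · simp only [Set.mem_singleton_iff]
    constructor
    · intro hs
      have hst := hs t
      rcases h1 with ht | ht
      · rw [hl0 t ht.le, sub_self, abs_zero, mul_zero, add_zero] at hst
        have h2 := abs_nonneg (s - t)
        have h3 := mul_nonneg hγ.le (hln s)
        have h4 : |s - t| = 0 := by linarith
        exact sub_eq_zero.mp (abs_eq_zero.mp h4)
      · rw [hl1 t (hγ.trans ht), sub_self, abs_zero, mul_one, zero_add] at hst
        by_cases hsp : 0 < s
        · rw [hl1 s hsp, mul_one] at hst
          have h4 : |s - t| = 0 := le_antisymm (by linarith) (abs_nonneg _)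
          exact sub_eq_zero.mp (abs_eq_zero.mp h4)
        · rw [hl0 s (not_lt.1 hsp), mul_zero, add_zero] at hst
          have := neg_abs_le (s - t)
          push_neg at hsp
          linarith
    · rintro rfl
      intro s'
      rcases h1 with ht | ht
      · rw [hl0 s ht.le, sub_self, abs_zero, mul_zero, add_zero]
        have := abs_nonneg (s' - s)
        have := mul_nonneg hγ.le (hln s')
        linarith
      · rw [hl1 s (hγ.trans ht), sub_self, abs_zero, mul_one, zero_add]
        by_cases hsp : 0 < s'
        · rw [hl1 s' hsp, mul_one]
          linarith [abs_nonneg (s' - s)]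
        · rw [hl0 s' (not_lt.1 hsp), mul_zero, add_zero]
          have := neg_abs_le (s' - s)
          push_neg at hsp
          linarith
  · have ht : 0 < t := by rw [h2]; exact hγ
    simp only [Set.mem_insert_iff, Set.mem_singleton_iff]
    constructor
    · intro hs
      have hs0 := hs 0
      rw [hl0 0 le_rfl, mul_zero, add_zero, zero_sub, abs_neg, abs_of_pos ht] at hs0
      by_cases hsp : 0 < s
      · right
        rw [hl1 s hsp, mul_one] at hs0
        have h4 : |s - t| = 0 := le_antisymm (by linarith) (abs_nonneg _)
        have h5 := sub_eq_zero.mp (abs_eq_zero.mp h4)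
        rw [h5, h2]
      · left
        push_neg at hsp
        rw [hl0 s hsp, mul_zero, add_zero] at hs0
        have := neg_abs_le (s - t)
        linarith
    · intro hs s'
      have hlhs : |s - t| + γ * l01 s = t := by
        rcases hs with h | h
        · rw [h, hl0 0 le_rfl, mul_zero, add_zero, zero_sub, abs_neg, abs_of_pos ht]
        · rw [h, hl1 γ hγ, mul_one, h2, sub_self, abs_zero, zero_add]
      rw [hlhs]
      by_cases hsp : 0 < s'
      · rw [hl1 s' hsp, mul_one]
        linarith [abs_nonneg (s' - t)]
      · push_neg at hsp
        rw [hl0 s' hsp, mul_zero, add_zero]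
        have := neg_abs_le (s' - t)
        linarith
  · push_neg at h1
    obtain ⟨ht0, htγ⟩ := h1
    have htγ' : t < γ := lt_of_le_of_ne htγ h2
    simp only [Set.mem_singleton_iff]
    constructor
    · intro hs
      have hs0 := hs 0
      rw [hl0 0 le_rfl, mul_zero, add_zero, zero_sub, abs_neg, abs_of_nonneg ht0] at hs0
      by_cases hsp : 0 < s
      · rw [hl1 s hsp, mul_one] at hs0
        linarith [abs_nonneg (s - t)]
      · push_neg at hsp
        rw [hl0 s hsp, mul_zero, add_zero] at hs0
        have := neg_abs_le (s - t)
        linarith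
    · rintro rfl
      intro s'
      rw [hl0 0 le_rfl, mul_zero, add_zero, zero_sub, abs_neg, abs_of_nonneg ht0]
      by_cases hsp : 0 < s'
      · rw [hl1 s' hsp, mul_one]
        linarith [abs_nonneg (s' - t)]
      · push_neg at hsp
        rw [hl0 s' hsp, mul_zero, add_zero]
        have := neg_abs_le (s' - t)
        linarith

end
end

section
/- Fix ρ, γ > 0. Let (z*, v*) ∈ (ℝ^n × ℝ) × ℝ^m and Γ₀* := {i : v*_i ≤ 0}. Then (z*, v*) is a local minimizer of the penalty problem (pen) if and only if (z*, v*) is a global minimizer of the convex problem: minimize Φ(z, v) := (1/2)‖w‖² + ρ Σ_{i=1}^m |u_i(z) − v_i| over (z, v) subject to v_i ≤ 0 for all i ∈ Γ₀*. -/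
open scoped RealInnerProductSpace BigOperators

noncomputable section

variable {n m : ℕ}

/-!
Near `(z*, v*)` the coordinates with `v*_i > 0` stay positive, so on the feasible set of the
convex problem the 0/1 term of (pen) is constant and a local minimizer of (pen) is a local
minimizer of `Φ` there; convexity of `Φ` makes it global. Conversely, for `p` near `(z*, v*)`,
replacing `p.2 i` by `min (p.2 i) 0` for `i ∈ Γ₀*` gives a feasible point. This raises
`|u_i - v_i|` only where `p.2 i > 0`, and there by at most `p.2 i < γ`, while the 0/1 term
drops by `γ` (both weighted by `ρ`); hence `Pen p ≥ Pen (z*, v*)`.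
-/

open Set Filter Topology

theorem convexOn_finset_sum {𝕜 E β ι : Type*} [Semiring 𝕜] [PartialOrder 𝕜] [AddCommMonoid E]
    [AddCommMonoid β] [PartialOrder β] [IsOrderedAddMonoid β] [SMul 𝕜 E] [Module 𝕜 β]
    {s : Set E} (hs : Convex 𝕜 s) (t : Finset ι) {f : ι → E → β}
    (hf : ∀ i ∈ t, ConvexOn 𝕜 s (f i)) : ConvexOn 𝕜 s fun p => ∑ i ∈ t, f i p := by
  classical
  induction t using Finset.induction_on with
  | empty => simpa using convexOn_const (0 : β) hs
  | insert j t hj ih =>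
    simp_rw [Finset.sum_insert hj]
    exact (hf j (Finset.mem_insert_self j t)).add
      (ih fun i hi => hf i (Finset.mem_insert_of_mem hi))

theorem eventually_forall_gt_of_gt {ι : Type*} [Finite ι] (v : EuclideanSpace ℝ ι) (c : ℝ) :
    ∀ᶠ w in 𝓝 v, ∀ i, c < v i → c < w i :=
  eventually_all.2 fun i => by
    by_cases hi : c < v i
    · exact ((PiLp.continuous_apply 2 _ i).continuousAt.eventually (lt_mem_nhds hi)).mono
        fun w hw _ => hw
    · exact Eventually.of_forall fun w h => absurd h hi

theorem eventually_forall_lt_of_lt {ι : Type*} [Finite ι] (v : EuclideanSpace ℝ ι) (c : ℝ) :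
    ∀ᶠ w in 𝓝 v, ∀ i, v i < c → w i < c :=
  eventually_all.2 fun i => by
    by_cases hi : v i < c
    · exact ((PiLp.continuous_apply 2 _ i).continuousAt.eventually (gt_mem_nhds hi)).mono
        fun w hw _ => hw
    · exact Eventually.of_forall fun w h => absurd h hi

theorem isLocalMin_iff_exists_forall_dist_le {α β : Type*} [PseudoMetricSpace α] [Preorder β]
    {f : α → β} {a : α} : IsLocalMin f a ↔ ∃ ε > 0, ∀ p, dist p a ≤ ε → f a ≤ f p :=
  Metric.nhds_basis_closedBall.eventually_iff

theorem l01_congr {a b : ℝ} (h : 0 < a ↔ 0 < b) : l01 a = l01 b := by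
  simp only [l01, h]

theorem abs_sub_min_zero_le (u : ℝ) {t γ : ℝ} (ht : t ≤ γ) :
    |u - min t 0| ≤ |u - t| + γ * l01 t := by
  rcases le_or_gt t 0 with h | h
  · simp [min_eq_left h, l01, not_lt.2 h]
  · calc |u - min t 0| = |(u - t) + t| := by rw [min_eq_right h.le]; ring_nf
      _ ≤ |u - t| + |t| := abs_add_le _ _
      _ ≤ |u - t| + γ * l01 t := by simp [l01, h, abs_of_pos h, ht]

section Penalty

variable {n m : ℕ} (x : Fin m → EuclideanSpace ℝ (Fin n)) (y : Fin m → ℝ)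

local notation "P" => (EuclideanSpace ℝ (Fin n) × ℝ) × EuclideanSpace ℝ (Fin m)

/-- The feasible set of the convex problem; `{i | vs i ≤ 0}` is the paper's `Γ₀*`. -/
def feasibleSet (vs : EuclideanSpace ℝ (Fin m)) : Set P := {p | ∀ i, vs i ≤ 0 → p.2 i ≤ 0}

theorem convex_feasibleSet (vs : EuclideanSpace ℝ (Fin m)) :
    Convex ℝ (feasibleSet vs : Set P) := by
  intro p hp q hq a b ha hb _ i hi
  simpa using add_nonpos (mul_nonpos_of_nonneg_of_nonpos ha (hp i hi))
    (mul_nonpos_of_nonneg_of_nonpos hb (hq i hi))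

theorem Pen_eq_Phi_add (ρ γ : ℝ) (p : P) :
    Pen x y ρ γ p = Phi x y ρ p + ρ * γ * ∑ i, l01 (p.2 i) := rfl

theorem convexOn_abs_uu_sub (i : Fin m) :
    ConvexOn ℝ univ fun p : P => |uu x y p.1 i - p.2 i| := by
  refine ⟨convex_univ, fun p _ q _ a b ha hb hab => ?_⟩
  have haffine : uu x y (a • p + b • q).1 i - (a • p + b • q).2 i
      = a * (uu x y p.1 i - p.2 i) + b * (uu x y q.1 i - q.2 i) := by
    obtain rfl : b = 1 - a := by linarith
    simp only [uu, Prod.fst_add, Prod.snd_add, Prod.smul_fst, Prod.smul_snd, inner_add_left,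
      real_inner_smul_left, PiLp.add_apply, PiLp.smul_apply, smul_eq_mul]
    ring
  simp only [haffine, smul_eq_mul]
  calc _ ≤ |a * (uu x y p.1 i - p.2 i)| + |b * (uu x y q.1 i - q.2 i)| := abs_add_le _ _
    _ = _ := by rw [abs_mul, abs_mul, abs_of_nonneg ha, abs_of_nonneg hb]

theorem convexOn_Phi {ρ : ℝ} (hρ : 0 ≤ ρ) : ConvexOn ℝ univ (Phi x y ρ : P → ℝ) := by
  have hsq : ConvexOn ℝ univ fun p : P => ‖p.1.1‖ ^ 2 :=
    (convexOn_univ_norm.pow (fun _ _ => norm_nonneg _) 2).comp_linearMap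
      (LinearMap.fst ℝ _ _ ∘ₗ LinearMap.fst ℝ _ _)
  exact (hsq.smul (by norm_num : (0 : ℝ) ≤ 1 / 2)).add
    ((convexOn_finset_sum convex_univ _ fun i _ => convexOn_abs_uu_sub x y i).smul hρ)

theorem isLocalMinOn_Phi_of_isLocalMin_Pen {ρ γ : ℝ} {a : P} (h : IsLocalMin (Pen x y ρ γ) a) :
    IsLocalMinOn (Phi x y ρ) (feasibleSet a.2) a := by
  have hpos : ∀ᶠ p in 𝓝 a, ∀ i, 0 < a.2 i → 0 < p.2 i :=
    continuous_snd.continuousAt.eventually (eventually_forall_gt_of_gt a.2 0)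
  refine eventually_nhdsWithin_iff.2 ((h.and hpos).mono fun p ⟨hle, hp⟩ hfeas => ?_)
  have hl01 : ∑ i, l01 (p.2 i) = ∑ i, l01 (a.2 i) := Finset.sum_congr rfl fun i _ =>
    l01_congr ⟨fun hi => lt_of_not_ge fun hi' => hi.not_ge (hfeas i hi'), hp i⟩
  rw [Pen_eq_Phi_add, Pen_eq_Phi_add, hl01] at hle
  linarith

def clampToFeasible (vs v : EuclideanSpace ℝ (Fin m)) : EuclideanSpace ℝ (Fin m) :=
  WithLp.toLp 2 fun i => if 0 < vs i then v i else min (v i) 0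

theorem mk_clampToFeasible_mem (vs : EuclideanSpace ℝ (Fin m)) (p : P) :
    (p.1, clampToFeasible vs p.2) ∈ feasibleSet vs := fun i hi => by
  simp [clampToFeasible, not_lt.2 hi]

theorem Phi_clampToFeasible_add_le {ρ γ : ℝ} (hρ : 0 ≤ ρ) {vs : EuclideanSpace ℝ (Fin m)} {p : P}
    (hpos : ∀ i, 0 < vs i → 0 < p.2 i) (hle : ∀ i, vs i ≤ 0 → p.2 i ≤ γ) :
    Phi x y ρ (p.1, clampToFeasible vs p.2) + ρ * γ * ∑ i, l01 (vs i) ≤ Pen x y ρ γ p := by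
  have hcoord : ∀ i, |uu x y p.1 i - clampToFeasible vs p.2 i| + γ * l01 (vs i)
      ≤ |uu x y p.1 i - p.2 i| + γ * l01 (p.2 i) := fun i => by
    by_cases hi : 0 < vs i
    · simp [clampToFeasible, hi, l01, hpos i hi]
    · simpa [clampToFeasible, hi, l01] using
        abs_sub_min_zero_le (uu x y p.1 i) (hle i (not_lt.1 hi))
  have hsum :=
    mul_le_mul_of_nonneg_left (Finset.sum_le_sum (s := Finset.univ) fun i _ => hcoord i) hρ
  simp only [Finset.sum_add_distrib, ← Finset.mul_sum] at hsum
  rw [Pen_eq_Phi_add]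
  simp only [Phi]
  linarith

theorem isLocalMin_Pen_of_isMinOn_Phi {ρ γ : ℝ} (hρ : 0 ≤ ρ) (hγ : 0 < γ) {a : P}
    (h : IsMinOn (Phi x y ρ) (feasibleSet a.2) a) : IsLocalMin (Pen x y ρ γ) a := by
  have hnear : ∀ᶠ p in 𝓝 a, (∀ i, 0 < a.2 i → 0 < p.2 i) ∧ ∀ i, a.2 i < γ → p.2 i < γ :=
    continuous_snd.continuousAt.eventually
      ((eventually_forall_gt_of_gt a.2 0).and (eventually_forall_lt_of_lt a.2 γ))
  refine hnear.mono fun p ⟨hpos, hlt⟩ => ?_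
  have hmin := isMinOn_iff.1 h _ (mk_clampToFeasible_mem a.2 p)
  have hclamp := Phi_clampToFeasible_add_le x y hρ hpos fun i hi => (hlt i (by linarith)).le
  rw [Pen_eq_Phi_add]
  linarith

end Penalty

theorem stmt10_general {n m : ℕ}
    (x : Fin m → EuclideanSpace ℝ (Fin n)) (y : Fin m → ℝ)
    (ρ γ : ℝ) (hρ : 0 < ρ) (hγ : 0 < γ)
    (zs : EuclideanSpace ℝ (Fin n) × ℝ) (vs : EuclideanSpace ℝ (Fin m)) :
    (∃ ε > 0, ∀ p : (EuclideanSpace ℝ (Fin n) × ℝ) × EuclideanSpace ℝ (Fin m),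
        dist p (zs, vs) ≤ ε → Pen x y ρ γ (zs, vs) ≤ Pen x y ρ γ p)
    ↔ ((∀ i, vs i ≤ 0 → vs i ≤ 0) ∧
       ∀ p : (EuclideanSpace ℝ (Fin n) × ℝ) × EuclideanSpace ℝ (Fin m),
         (∀ i, vs i ≤ 0 → p.2 i ≤ 0) → Phi x y ρ (zs, vs) ≤ Phi x y ρ p) := by
  have hmem : (zs, vs) ∈ feasibleSet vs := fun _ hi => hi
  rw [← isLocalMin_iff_exists_forall_dist_le]
  constructor
  · intro hloc
    have hconv : ConvexOn ℝ (feasibleSet vs) (Phi x y ρ) :=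
      (convexOn_Phi x y hρ.le).subset (subset_univ _) (convex_feasibleSet vs)
    exact ⟨hmem, isMinOn_iff.1 <| IsMinOn.of_isLocalMinOn_of_convexOn hmem
      (isLocalMinOn_Phi_of_isLocalMin_Pen x y hloc) hconv⟩
  · exact fun ⟨_, hmin⟩ => isLocalMin_Pen_of_isMinOn_Phi x y hρ.le hγ (isMinOn_iff.2 hmin)

/-- `(z*, v*)` is a local minimizer of the penalty problem (pen) iff it
is a global minimizer of `Φ` subject to `v_i ≤ 0` for `i ∈ Γ₀* = {i : v*_i ≤ 0}`. -/
theorem stmt10 {n m : ℕ} (hn : 0 < n) (hm : 0 < m)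
    (x : Fin m → EuclideanSpace ℝ (Fin n)) (y : Fin m → ℝ)
    (hy : ∀ i, y i = 1 ∨ y i = -1)
    (ρ γ : ℝ) (hρ : 0 < ρ) (hγ : 0 < γ)
    (zs : EuclideanSpace ℝ (Fin n) × ℝ) (vs : EuclideanSpace ℝ (Fin m)) :
    (∃ ε > 0, ∀ p : (EuclideanSpace ℝ (Fin n) × ℝ) × EuclideanSpace ℝ (Fin m),
        dist p (zs, vs) ≤ ε → Pen x y ρ γ (zs, vs) ≤ Pen x y ρ γ p)
    ↔ ((∀ i, vs i ≤ 0 → vs i ≤ 0) ∧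
       ∀ p : (EuclideanSpace ℝ (Fin n) × ℝ) × EuclideanSpace ℝ (Fin m),
         (∀ i, vs i ≤ 0 → p.2 i ≤ 0) → Phi x y ρ (zs, vs) ≤ Phi x y ρ p) :=
  stmt10_general x y ρ γ hρ hγ zs vs

end
end

section
/- Fix λ > 0, let z* = (w*, b*) be a local minimizer of (P_{0/1}), and let α* ∈ ℝ^m satisfy (KKT-PI) at z*. With u*_i := u_i(z*), suppose ρ > max_{i∈{1,…,m}} α*_i and γ > 0 satisfies γ < u*_i for every i with u*_i > 0. Then z* is a local minimizer of the ramp-loss SVM (P_r) with parameters ρ and γ. -/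
open scoped RealInnerProductSpace BigOperators

noncomputable section

variable {n m : ℕ}

/-- a local minimizer `z*` of `(P_{0/1})` with multiplier `α*`
satisfying (KKT-PI) is a local minimizer of the ramp-loss SVM `(P_r)` whenever
`ρ > max_i α*_i` and `0 < γ < min{u*_i : u*_i > 0}`. -/
theorem stmt11 {n m : ℕ} (hn : 0 < n) (hm : 0 < m)
    (x : Fin m → EuclideanSpace ℝ (Fin n)) (y : Fin m → ℝ)
    (hy : ∀ i, y i = 1 ∨ y i = -1)
    (lam : ℝ) (hlam : 0 < lam)
    (zs : EuclideanSpace ℝ (Fin n) × ℝ)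
    (hloc : ∃ ε > 0, ∀ z : EuclideanSpace ℝ (Fin n) × ℝ,
      dist z zs ≤ ε → F01 x y lam zs ≤ F01 x y lam z)
    (αs : EuclideanSpace ℝ (Fin m)) (hkkt : KKTPI x y zs αs)
    (ρ γ : ℝ) (hρ : ∀ i, αs i < ρ) (hγ0 : 0 < γ)
    (hγ : ∀ i, 0 < uu x y zs i → γ < uu x y zs i) :
    ∃ ε > 0, ∀ z : EuclideanSpace ℝ (Fin n) × ℝ,
      dist z zs ≤ ε → PrObj x y ρ γ zs ≤ PrObj x y ρ γ z := by
  obtain ⟨hw, hcomp, hzero, hbal⟩ := hkkt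
  -- key linear identity
  have key : ∀ z : EuclideanSpace ℝ (Fin n) × ℝ,
      ∑ i, αs i * uu x y z i = (∑ i, αs i) - ⟪z.1, zs.1⟫ := by
    intro z
    have hin : ⟪z.1, zs.1⟫ = ∑ i, (αs i * y i) * ⟪z.1, x i⟫ := by
      rw [hw, inner_sum]
      refine Finset.sum_congr rfl fun i _ => ?_
      rw [real_inner_smul_right]
    calc ∑ i, αs i * uu x y z i
        = ∑ i, (αs i - (αs i * y i) * ⟪z.1, x i⟫ - (y i * αs i) * z.2) := by
          refine Finset.sum_congr rfl fun i _ => ?_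
          simp only [uu]; ring
      _ = (∑ i, αs i) - (∑ i, (αs i * y i) * ⟪z.1, x i⟫)
            - (∑ i, y i * αs i) * z.2 := by
          rw [Finset.sum_sub_distrib, Finset.sum_sub_distrib, Finset.sum_mul]
      _ = (∑ i, αs i) - ⟪z.1, zs.1⟫ := by rw [hbal, hin]; ring
  -- complementarity: each α_i u*_i = 0
  have hcompl : ∀ i, αs i * uu x y zs i = 0 := by
    intro i
    by_cases h : uu x y zs i ≤ 0
    · exact (hcomp i h).2
    · rw [hzero i h, zero_mul]
  have hsum0 : ∑ i, αs i * uu x y zs i = 0 := by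
    simp [hcompl]
  have hS : (∑ i, αs i) = ⟪zs.1, zs.1⟫ := by
    have := key zs
    rw [hsum0] at this
    linarith
  -- star inequality
  have star : ∀ z : EuclideanSpace ℝ (Fin n) × ℝ,
      (1 / 2) * ‖zs.1‖ ^ 2 ≤ (1 / 2) * ‖z.1‖ ^ 2 + ∑ i, αs i * uu x y z i := by
    intro z
    rw [key z, hS]
    have h1 : ‖z.1 - zs.1‖ ^ 2 = ‖z.1‖ ^ 2 - 2 * ⟪z.1, zs.1⟫ + ‖zs.1‖ ^ 2 :=
      norm_sub_sq_real z.1 zs.1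
    have h2 : (0:ℝ) ≤ ‖z.1 - zs.1‖ ^ 2 := sq_nonneg _
    have h3 : ⟪zs.1, zs.1⟫ = ‖zs.1‖ ^ 2 := real_inner_self_eq_norm_sq zs.1
    nlinarith
  -- continuity of margins
  have hcont : ∀ i, Continuous fun z : EuclideanSpace ℝ (Fin n) × ℝ => uu x y z i := by
    intro i
    unfold uu
    exact continuous_const.sub (continuous_const.mul
      ((continuous_fst.inner continuous_const).add continuous_snd))
  -- open neighborhood where margins behave
  set Si : Fin m → Set (EuclideanSpace ℝ (Fin n) × ℝ) := fun i =>
    if 0 < uu x y zs i then (fun z => uu x y z i) ⁻¹' Set.Ioi γ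
    else (fun z => uu x y z i) ⁻¹' Set.Iio γ with hSi
  have hSopen : IsOpen (⋂ i, Si i) := by
    refine isOpen_iInter_of_finite fun i => ?_
    simp only [hSi]
    split
    · exact isOpen_Ioi.preimage (hcont i)
    · exact isOpen_Iio.preimage (hcont i)
  have hmem : zs ∈ ⋂ i, Si i := by
    refine Set.mem_iInter.2 fun i => ?_
    simp only [hSi]
    split
    · next h => exact hγ i h
    · next h => exact lt_of_le_of_lt (not_lt.1 h) hγ0
  obtain ⟨δ, hδ0, hball⟩ := Metric.isOpen_iff.1 hSopen zs hmem
  refine ⟨δ / 2, by linarith, fun z hz => ?_⟩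
  have hzS : z ∈ ⋂ i, Si i := hball (by
    rw [Metric.mem_ball]; linarith [hz])
  -- termwise inequality
  have hterm : ∀ i, ρ * ramp γ (uu x y zs i) + αs i * uu x y z i
      ≤ ρ * ramp γ (uu x y z i) := by
    intro i
    have hi := Set.mem_iInter.1 hzS i
    simp only [hSi] at hi
    by_cases h : 0 < uu x y zs i
    · rw [if_pos h] at hi
      have h1 : γ < uu x y z i := hi
      have h2 : γ < uu x y zs i := hγ i h
      have hα : αs i = 0 := hzero i (not_le.2 h)
      simp only [ramp]
      rw [if_pos h1, if_pos h2, hα]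
      simp
    · rw [if_neg h] at hi
      have h1 : uu x y z i < γ := hi
      have hle : uu x y zs i ≤ 0 := not_lt.1 h
      have hα : 0 ≤ αs i := (hcomp i hle).1
      have hrs : ramp γ (uu x y zs i) = 0 := by
        rw [ramp, if_neg (by linarith)]
        split
        · next h2 => linarith
        · rfl
      rw [hrs, mul_zero, zero_add, ramp, if_neg (not_lt.2 h1.le)]
      split
      · next h2 => nlinarith [hρ i]
      · next h2 => nlinarith
  -- combine
  have hsum : ρ * ∑ i, ramp γ (uu x y zs i) + ∑ i, αs i * uu x y z i
      ≤ ρ * ∑ i, ramp γ (uu x y z i) := by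
    rw [Finset.mul_sum, Finset.mul_sum, ← Finset.sum_add_distrib]
    exact Finset.sum_le_sum fun i _ => hterm i
  have := star z
  simp only [PrObj]
  linarith
end
end

section
/- Fix λ > 0, let z* = (w*, b*) be a local minimizer of (P_{0/1}), and let α* ∈ ℝ^m satisfy (KKT-PI) at z*. Set u* := (u_1(z*),…,u_m(z*)). If ρ > max_{i∈{1,…,m}} α*_i, then for every γ > 0 the point (z*, u*) is a local minimizer of the penalty problem (pen) with parameters ρ and γ. -/
open scoped RealInnerProductSpace BigOperators

noncomputable section

variable {n m : ℕ}

/-!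
The KKT multipliers act as a linear lower bound. Writing `u_i` for `u_i(z)`, stationarity
`w* = Σ α*_i y_i x_i` together with `Σ y_i α*_i = 0` gives `Σ α*_i (u*_i - u_i) = ⟪w*, w - w*⟫`,
and `½‖w*‖² + ⟪w*, w - w*⟫ ≤ ½‖w‖²` by convexity. It therefore suffices to show, coordinatewise,
`ργ ℓ(u*_i) ≤ ρ|u_i - v_i| + ργ ℓ(v_i) + α*_i (u*_i - u_i)` for `v` near `u*`. If `u*_i > 0` then
`α*_i = 0` and `v_i > 0`. If `u*_i ≤ 0` then `α*_i u*_i = 0`, so the right-hand side is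
`ρ|u_i - v_i| - α*_i (u_i - v_i) + ργ ℓ(v_i) - α*_i v_i`; the first difference is nonnegative as
`0 ≤ α*_i < ρ`, and `α*_i v_i ≤ ργ ℓ(v_i)` as long as `v_i ≤ γ`.
-/

open Filter Topology

lemma half_sq_norm_add_inner_sub_le {F : Type*} [NormedAddCommGroup F] [InnerProductSpace ℝ F]
    (a b : F) : (1 / 2 : ℝ) * ‖a‖ ^ 2 + ⟪a, b - a⟫ ≤ (1 / 2) * ‖b‖ ^ 2 := by
  have h := norm_sub_sq_real b a
  rw [inner_sub_right, real_inner_self_eq_norm_sq, real_inner_comm b a]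
  linarith [sq_nonneg ‖b - a‖]

lemma mul_l01_le_of_complementarity {a u₀ u v ρ γ : ℝ} (hγ : 0 < γ) (haρ : a < ρ)
    (hnonpos : u₀ ≤ 0 → 0 ≤ a ∧ a * u₀ = 0) (hpos : ¬ u₀ ≤ 0 → a = 0)
    (hv_le : u₀ ≤ 0 → v ≤ γ) (hv_pos : 0 < u₀ → 0 < v) :
    ρ * γ * l01 u₀ ≤ ρ * |u - v| + ρ * γ * l01 v + a * (u₀ - u) := by
  by_cases hu₀ : u₀ ≤ 0
  · obtain ⟨ha, hau₀⟩ := hnonpos hu₀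
    have hρ_abs : a * (u - v) ≤ ρ * |u - v| :=
      (mul_le_mul_of_nonneg_left (le_abs_self _) ha).trans
        (mul_le_mul_of_nonneg_right haρ.le (abs_nonneg _))
    have hav : a * v ≤ ρ * γ * l01 v := by
      unfold l01
      split_ifs with hv
      · nlinarith [hv_le hu₀]
      · nlinarith
    have : l01 u₀ = 0 := if_neg (not_lt.mpr hu₀)
    rw [this]
    linarith
  · have ha := hpos hu₀
    have hu₀' := lt_of_not_ge hu₀
    simp only [l01, if_pos hu₀', if_pos (hv_pos hu₀'), ha]
    nlinarith [abs_nonneg (u - v)]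

variable {n m : ℕ} (x : Fin m → EuclideanSpace ℝ (Fin n)) (y : Fin m → ℝ)

lemma sum_mul_uu_sub_eq_inner {zs : EuclideanSpace ℝ (Fin n) × ℝ} {αs : EuclideanSpace ℝ (Fin m)}
    (hw : zs.1 = ∑ i, (αs i * y i) • x i) (hsum : ∑ i, y i * αs i = 0)
    (z : EuclideanSpace ℝ (Fin n) × ℝ) :
    ∑ i, αs i * (uu x y zs i - uu x y z i) = ⟪zs.1, z.1 - zs.1⟫ := by
  have hinner : ⟪zs.1, z.1 - zs.1⟫ = ∑ i, αs i * y i * (⟪z.1, x i⟫ - ⟪zs.1, x i⟫) :=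
    calc ⟪zs.1, z.1 - zs.1⟫ = ⟪∑ i, (αs i * y i) • x i, z.1 - zs.1⟫ := by rw [← hw]
      _ = _ := by simp only [sum_inner, real_inner_smul_left, inner_sub_right, real_inner_comm (x _),
        mul_sub, Finset.sum_sub_distrib]
  have hterm : ∀ i, αs i * (uu x y zs i - uu x y z i)
      = αs i * y i * (⟪z.1, x i⟫ - ⟪zs.1, x i⟫) + y i * αs i * (z.2 - zs.2) := by
    intro i
    simp only [uu]
    ring
  rw [hinner, Finset.sum_congr rfl fun i _ => hterm i, Finset.sum_add_distrib, ← Finset.sum_mul,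
    hsum, zero_mul, add_zero]

lemma Pen_eq_of_eq_uu (ρ γ : ℝ) {z : EuclideanSpace ℝ (Fin n) × ℝ} {v : EuclideanSpace ℝ (Fin m)}
    (hv : ∀ i, v i = uu x y z i) :
    Pen x y ρ γ (z, v) = (1 / 2) * ‖z.1‖ ^ 2 + ρ * γ * ∑ i, l01 (v i) := by
  simp [Pen, hv]

lemma Pen_le_of_KKTPI {zs : EuclideanSpace ℝ (Fin n) × ℝ} {αs us : EuclideanSpace ℝ (Fin m)}
    (hkkt : KKTPI x y zs αs) (hus : ∀ i, us i = uu x y zs i) {ρ γ : ℝ} (hγ : 0 < γ)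
    (hρ : ∀ i, αs i < ρ) (p : (EuclideanSpace ℝ (Fin n) × ℝ) × EuclideanSpace ℝ (Fin m))
    (hp : ∀ i, (us i ≤ 0 → p.2 i ≤ γ) ∧ (0 < us i → 0 < p.2 i)) :
    Pen x y ρ γ (zs, us) ≤ Pen x y ρ γ p := by
  obtain ⟨hw, hnonpos, hpos, hsum⟩ := hkkt
  rw [Pen_eq_of_eq_uu x y ρ γ hus, Pen]
  simp only [hus] at hp ⊢
  have hterm : ∀ i ∈ Finset.univ, ρ * γ * l01 (uu x y zs i)
      ≤ ρ * |uu x y p.1 i - p.2 i| + ρ * γ * l01 (p.2 i) + αs i * (uu x y zs i - uu x y p.1 i) :=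
    fun i _ => mul_l01_le_of_complementarity hγ (hρ i) (hnonpos i) (hpos i) (hp i).1 (hp i).2
  have hsum_le := Finset.sum_le_sum hterm
  simp only [Finset.sum_add_distrib, ← Finset.mul_sum, sum_mul_uu_sub_eq_inner x y hw hsum] at hsum_le
  linarith [half_sq_norm_add_inner_sub_le zs.1 p.1.1]

lemma eventually_nhds_coord_le_and_pos {ι : Type*} [Fintype ι] (u : EuclideanSpace ℝ ι) {γ : ℝ}
    (hγ : 0 < γ) : ∀ᶠ v in 𝓝 u, ∀ i, (u i ≤ 0 → v i ≤ γ) ∧ (0 < u i → 0 < v i) := by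
  refine eventually_all.mpr fun i => ?_
  have hcont : ContinuousAt (fun v : EuclideanSpace ℝ ι => v i) u := by fun_prop
  by_cases hu : u i ≤ 0
  · filter_upwards [hcont.eventually (eventually_lt_nhds (hu.trans_lt hγ))] with v hv
    exact ⟨fun _ => hv.le, fun h => absurd h (not_lt.mpr hu)⟩
  · filter_upwards [hcont.eventually (eventually_gt_nhds (lt_of_not_ge hu))] with v hv
    exact ⟨fun h => absurd h hu, fun _ => hv⟩

lemma isLocalMin_Pen_of_KKTPI {zs : EuclideanSpace ℝ (Fin n) × ℝ} {αs us : EuclideanSpace ℝ (Fin m)}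
    (hkkt : KKTPI x y zs αs) (hus : ∀ i, us i = uu x y zs i) {ρ γ : ℝ} (hγ : 0 < γ)
    (hρ : ∀ i, αs i < ρ) : IsLocalMin (Pen x y ρ γ) (zs, us) :=
  (continuousAt_snd.eventually (eventually_nhds_coord_le_and_pos us hγ)).mono
    (Pen_le_of_KKTPI x y hkkt hus hγ hρ)

theorem stmt12_general {n m : ℕ}
    (x : Fin m → EuclideanSpace ℝ (Fin n)) (y : Fin m → ℝ)
    (zs : EuclideanSpace ℝ (Fin n) × ℝ)
    (αs : EuclideanSpace ℝ (Fin m)) (hkkt : KKTPI x y zs αs)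
    (us : EuclideanSpace ℝ (Fin m)) (hus : ∀ i, us i = uu x y zs i)
    (ρ : ℝ) (hρ : ∀ i, αs i < ρ) :
    ∀ γ : ℝ, 0 < γ →
      ∃ ε > 0, ∀ p : (EuclideanSpace ℝ (Fin n) × ℝ) × EuclideanSpace ℝ (Fin m),
        dist p (zs, us) ≤ ε → Pen x y ρ γ (zs, us) ≤ Pen x y ρ γ p := by
  intro γ hγ
  obtain ⟨ε, hε, hball⟩ :=
    Metric.nhds_basis_closedBall.eventually_iff.mp (isLocalMin_Pen_of_KKTPI x y hkkt hus hγ hρ)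
  exact ⟨ε, hε, fun p hp => hball (Metric.mem_closedBall.mpr hp)⟩

/-- under (KKT-PI) at a local minimizer `z*` of `(P_{0/1})`, if
`ρ > max_i α*_i` then for every `γ > 0` the point `(z*, u*)` is a local minimizer of
the penalty problem (pen). -/
theorem stmt12 {n m : ℕ} (hn : 0 < n) (hm : 0 < m)
    (x : Fin m → EuclideanSpace ℝ (Fin n)) (y : Fin m → ℝ)
    (hy : ∀ i, y i = 1 ∨ y i = -1)
    (lam : ℝ) (hlam : 0 < lam)
    (zs : EuclideanSpace ℝ (Fin n) × ℝ)
    (hloc : ∃ ε > 0, ∀ z : EuclideanSpace ℝ (Fin n) × ℝ,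
      dist z zs ≤ ε → F01 x y lam zs ≤ F01 x y lam z)
    (αs : EuclideanSpace ℝ (Fin m)) (hkkt : KKTPI x y zs αs)
    (us : EuclideanSpace ℝ (Fin m)) (hus : ∀ i, us i = uu x y zs i)
    (ρ : ℝ) (hρ : ∀ i, αs i < ρ) :
    ∀ γ : ℝ, 0 < γ →
      ∃ ε > 0, ∀ p : (EuclideanSpace ℝ (Fin n) × ℝ) × EuclideanSpace ℝ (Fin m),
        dist p (zs, us) ≤ ε → Pen x y ρ γ (zs, us) ≤ Pen x y ρ γ p :=
  stmt12_general x y zs αs hkkt us hus ρ hρ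

end
end
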